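/- arXiv:2407.19500 — 4 statements merged into one kernel-verified Lean document; each statement's English description precedes it below -/
import Mathlib

section
/- For every a = diag(a_1,…,a_n) with all a_i ≠ 0, the map N × N → Mat_n(ℝ), (n_1, n_2) ↦ n_1 w a n_2, is injective and proper (the preimage of every compact subset of Mat_n(ℝ) is compact); consequently, for every Schwartz function Φ on Mat_n(ℝ), the Kuznetsov orbital integral ∫_{N×N} |Φ(n_1 w a n_2)| dn_1 dn_2 is finite. -/
open MeasureTheory Complex

noncomputable section

/-- The space `Mat_n(ℝ)` of real `n × n` matrices, as a normed space of functions on the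
entries, carrying the Lebesgue measure on matrix entries. -/
abbrev MatSpace (n : ℕ) := Fin n × Fin n → ℝ

/-- Interpret a point of `MatSpace n` as a matrix. -/
def toMat {n : ℕ} (X : MatSpace n) : Matrix (Fin n) (Fin n) ℝ :=
  Matrix.of fun i j => X (i, j)

/-- Interpret a matrix as a point of `MatSpace n`. -/
def ofMat {n : ℕ} (M : Matrix (Fin n) (Fin n) ℝ) : MatSpace n :=
  fun p => M p.1 p.2

/-- The indexing set of the strictly upper-triangular entries of an `n × n` matrix;
the group `N` of upper unitriangular matrices is identified with `ℝ^{n(n−1)/2}` as the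
space of functions on this set, with the corresponding Lebesgue (product) measure. -/
abbrev UpperIdx (n : ℕ) := {p : Fin n × Fin n // p.1 < p.2}

/-- The upper unitriangular matrix with the given strictly upper-triangular entries. -/
def unitri {n : ℕ} (u : UpperIdx n → ℝ) : Matrix (Fin n) (Fin n) ℝ :=
  Matrix.of fun i j =>
    if i = j then 1 else if h : i < j then u ⟨(i, j), h⟩ else 0

/-- The antidiagonal permutation matrix `w`, with `w_{i, n+1−i} = 1`. -/
def wAntidiag (n : ℕ) : Matrix (Fin n) (Fin n) ℝ :=
  Matrix.of fun i j => if j = Fin.rev i then 1 else 0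

/-- The map `N × N → Mat_n(ℝ)`, `(n₁, n₂) ↦ n₁ w a n₂`, for `a = diag(a₁, …, a_n)`. -/
def kuzMap {n : ℕ} (a : Fin n → ℝ) (u : (UpperIdx n → ℝ) × (UpperIdx n → ℝ)) :
    MatSpace n :=
  ofMat (unitri u.1 * wAntidiag n * Matrix.diagonal a * unitri u.2)


/-!
Conjugating by `w` turns `n₁` into the lower unitriangular matrix `w n₁ w`, so
`w · (n₁ w a n₂) = (w n₁ w) · a · n₂` is an LDU decomposition. Its unipotent factors are
recovered from the matrix by Jacobi's formula: `(n₂)ₖⱼ` is the minor on rows `i ≤ k` and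
columns `i < k` and `j`, divided by `a₁ ⋯ aₖ`; transposing recovers `n₁` the same way.
This is a continuous left inverse of `kuzMap a`, which is therefore a closed embedding, and
since the minors have degree at most `n`, `‖(n₁, n₂)‖ ≤ C (1 + ‖n₁ w a n₂‖) ^ n`. The decay of a
Schwartz function then dominates the integrand by an integrable `(1 + ‖u‖) ^ (-N)`.
-/

namespace Matrix

variable {ι R K : Type*} [LinearOrder ι] [LocallyFiniteOrderBot ι] [CommRing R] [Field K]

def cornerMinor (X : Matrix ι ι R) (k j : ι) : R :=
  (X.submatrix (Subtype.val : Set.Iic k → ι)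
    (Function.update Subtype.val ⟨k, Set.self_mem_Iic⟩ j)).det

def lduUpperEntry (d : ι → K) (X : Matrix ι ι K) (k j : ι) : K :=
  cornerMinor X k j / ∏ i : Set.Iic k, d i

@[fun_prop]
lemma continuous_lduUpperEntry [TopologicalSpace K] [IsTopologicalRing K] (d : ι → K)
    (k j : ι) : Continuous fun X : Matrix ι ι K => lduUpperEntry d X k j := by
  unfold lduUpperEntry cornerMinor
  fun_prop

variable [Fintype ι]

lemma submatrix_Iic_mul_of_isLowerTriangular {L B : Matrix ι ι R} (hL : L.IsLowerTriangular)
    (k : ι) {κ : Type*} (c : κ → ι) :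
    (L * B).submatrix (Subtype.val : Set.Iic k → ι) c
      = L.submatrix (Subtype.val : Set.Iic k → ι) (Subtype.val : Set.Iic k → ι)
        * B.submatrix (Subtype.val : Set.Iic k → ι) c := by
  ext i j
  simp only [submatrix_apply, mul_apply]
  calc ∑ l, L i l * B l (c j)
      = ∑ l ∈ Finset.Iic k, L i l * B l (c j) := by
        refine (Finset.sum_subset (Finset.subset_univ _) fun l _ hl => ?_).symm
        have hil : i.1 < l := lt_of_le_of_lt i.2 (not_le.mp (by simpa using hl))
        rw [hL hil, zero_mul]
    _ = ∑ l : Set.Iic k, L i l * B l (c j) := Finset.sum_subtype _ (by simp) _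

lemma cornerMinor_mul_diagonal_mul {L U : Matrix ι ι R} (hL : L.IsLowerTriangular)
    (hL₁ : ∀ i, L i i = 1) (hU : U.IsUpperTriangular) (hU₁ : ∀ i, U i i = 1) (d : ι → R)
    (k j : ι) :
    cornerMinor (L * (diagonal d * U)) k j = (∏ i : Set.Iic k, d i) * U k j := by
  set kk : Set.Iic k := ⟨k, Set.self_mem_Iic⟩
  have hcol (i : Set.Iic k) (hi : i ≠ kk) : Function.update Subtype.val kk j i = i :=
    Function.update_of_ne hi _ _
  have hLk : (L.submatrix (Subtype.val : Set.Iic k → ι) Subtype.val).IsLowerTriangular :=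
    fun _ _ h => hL h
  have hDU : ((diagonal d * U).submatrix (Subtype.val : Set.Iic k → ι)
      (Function.update Subtype.val kk j)).IsUpperTriangular := by
    intro i i' h
    have hi' : i' ≠ kk := by
      rintro rfl
      exact absurd i.2 (not_le.mpr h)
    simp only [submatrix_apply, diagonal_mul, hcol i' hi']
    rw [hU (show (i' : ι) < i from h), mul_zero]
  rw [cornerMinor, submatrix_Iic_mul_of_isLowerTriangular hL, det_mul,
    det_of_isLowerTriangular _ hLk, det_of_isUpperTriangular hDU]
  simp only [submatrix_apply, hL₁, Finset.prod_const_one, one_mul, diagonal_mul,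
    Finset.prod_mul_distrib]
  congr 1
  rw [Finset.prod_eq_single kk (fun i _ hi => by rw [hcol i hi, hU₁]) (by simp)]
  simp [kk]

lemma lduUpperEntry_mul_diagonal_mul {L U : Matrix ι ι K} (hL : L.IsLowerTriangular)
    (hL₁ : ∀ i, L i i = 1) (hU : U.IsUpperTriangular) (hU₁ : ∀ i, U i i = 1) {d : ι → K}
    (hd : ∀ i, d i ≠ 0) (k j : ι) :
    lduUpperEntry d (L * (diagonal d * U)) k j = U k j := by
  rw [lduUpperEntry, cornerMinor_mul_diagonal_mul hL hL₁ hU hU₁]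
  exact mul_div_cancel_left₀ _ (Finset.prod_ne_zero_iff.2 fun i _ => hd i)

lemma lduUpperEntry_transpose_mul_diagonal_mul {L U : Matrix ι ι K} (hL : L.IsLowerTriangular)
    (hL₁ : ∀ i, L i i = 1) (hU : U.IsUpperTriangular) (hU₁ : ∀ i, U i i = 1) {d : ι → K}
    (hd : ∀ i, d i ≠ 0) (k j : ι) :
    lduUpperEntry d (L * (diagonal d * U))ᵀ k j = L j k := by
  have hLDU : (L * (diagonal d * U))ᵀ = Uᵀ * (diagonal d * Lᵀ) := by
    rw [transpose_mul, transpose_mul, diagonal_transpose, Matrix.mul_assoc]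
  rw [hLDU, lduUpperEntry_mul_diagonal_mul hU.transpose hU₁ hL.transpose hL₁ hd]
  rfl

lemma abs_lduUpperEntry_le (d : ι → ℝ) {X : Matrix ι ι ℝ} {b : ℝ} (hb : 1 ≤ b)
    (hX : ∀ i j, |X i j| ≤ b) (k j : ι) :
    |lduUpperEntry d X k j|
      ≤ |(∏ i : Set.Iic k, d i)⁻¹| * ((Fintype.card ι).factorial * b ^ Fintype.card ι) := by
  have hcard : Fintype.card (Set.Iic k) ≤ Fintype.card ι := Fintype.card_subtype_le _
  have hminor : |cornerMinor X k j| ≤ (Fintype.card ι).factorial * b ^ Fintype.card ι :=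
    calc |cornerMinor X k j|
        ≤ (Fintype.card (Set.Iic k)).factorial • b ^ Fintype.card (Set.Iic k) :=
          det_le (abv := AbsoluteValue.abs) fun _ _ => hX _ _
      _ ≤ (Fintype.card ι).factorial * b ^ Fintype.card ι := by
          rw [nsmul_eq_mul]
          gcongr
  rw [lduUpperEntry, div_eq_mul_inv, abs_mul, mul_comm]
  gcongr

end Matrix

namespace SchwartzMap

variable {E V F : Type*} [NormedAddCommGroup E] [NormedSpace ℝ E] [NormedAddCommGroup V]
  [NormedSpace ℝ V] [NormedAddCommGroup F] [MeasurableSpace F]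

lemma hasFiniteIntegral_comp_of_norm_le {μ : Measure F} [μ.HasTemperateGrowth]
    (Φ : SchwartzMap E V) {f : F → E} {C : ℝ} {k : ℕ}
    (hf : ∀ x, ‖x‖ ≤ C * (1 + ‖f x‖) ^ k) :
    HasFiniteIntegral (fun x => Φ (f x)) μ := by
  set l := μ.integrablePower
  set S := 2 ^ (k * l) * (Finset.Iic (k * l, 0)).sup (fun m => SchwartzMap.seminorm ℝ m.1 m.2) Φ
  have hΦ (y : E) : (1 + ‖y‖) ^ (k * l) * ‖Φ y‖ ≤ S := by
    simpa using Φ.one_add_le_sup_seminorm_apply (𝕜 := ℝ) (m := (k * l, 0)) le_rfl le_rfl y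
  have hC : 0 ≤ C := nonneg_of_mul_nonneg_left ((norm_nonneg _).trans (hf 0)) (by positivity)
  have hdecay (x : F) : ‖x‖ ^ (0 + l) * ‖Φ (f x)‖ ≤ C ^ l * S :=
    calc ‖x‖ ^ (0 + l) * ‖Φ (f x)‖ ≤ (C * (1 + ‖f x‖) ^ k) ^ l * ‖Φ (f x)‖ := by
          rw [zero_add]; gcongr; exact hf x
      _ = C ^ l * ((1 + ‖f x‖) ^ (k * l) * ‖Φ (f x)‖) := by ring
      _ ≤ C ^ l * S := by gcongr; exact hΦ _
  refine ((Measure.integrable_pow_neg_integrablePower μ).const_mul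
    (2 ^ l * (SchwartzMap.seminorm ℝ 0 0 Φ + C ^ l * S))).hasFiniteIntegral.mono'
    (ae_of_all _ fun x => ?_)
  simpa using pow_mul_le_of_le_of_pow_mul_le (norm_nonneg x) (norm_nonneg _)
    (Φ.norm_le_seminorm ℝ (f x)) (hdecay x)

end SchwartzMap

open Matrix

variable {n : ℕ}

lemma wAntidiag_mul (X : Matrix (Fin n) (Fin n) ℝ) :
    wAntidiag n * X = X.submatrix Fin.rev id := by
  ext i j
  simp [wAntidiag, mul_apply]

lemma mul_wAntidiag (X : Matrix (Fin n) (Fin n) ℝ) :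
    X * wAntidiag n = X.submatrix id Fin.rev := by
  ext i j
  simp [wAntidiag, mul_apply, eq_comm (a := j), Fin.rev_eq_iff]

lemma unitri_isUpperTriangular (u : UpperIdx n → ℝ) : (unitri u).IsUpperTriangular :=
  fun i j (h : j < i) => by simp [unitri, h.ne', h.not_gt]

lemma unitri_apply_self (u : UpperIdx n → ℝ) (i : Fin n) : unitri u i i = 1 := by
  simp [unitri]

lemma unitri_apply_of_lt (u : UpperIdx n → ℝ) {i j : Fin n} (h : i < j) :
    unitri u i j = u ⟨(i, j), h⟩ := by
  simp [unitri, h.ne, h]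

lemma unitri_submatrix_rev_isLowerTriangular (u : UpperIdx n → ℝ) :
    ((unitri u).submatrix Fin.rev Fin.rev).IsLowerTriangular :=
  fun _ _ h => unitri_isUpperTriangular u (Fin.rev_lt_rev.2 h)

@[fun_prop]
lemma continuous_unitri :
    Continuous (unitri : (UpperIdx n → ℝ) → Matrix (Fin n) (Fin n) ℝ) := by
  refine continuous_matrix fun i j => ?_
  simp only [unitri, of_apply]
  split_ifs <;> fun_prop

@[fun_prop]
lemma continuous_toMat : Continuous (toMat : MatSpace n → Matrix (Fin n) (Fin n) ℝ) :=
  continuous_matrix fun _ _ => continuous_apply _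

lemma wAntidiag_mul_toMat_kuzMap (a : Fin n → ℝ) (u : (UpperIdx n → ℝ) × (UpperIdx n → ℝ)) :
    wAntidiag n * toMat (kuzMap a u)
      = (unitri u.1).submatrix Fin.rev Fin.rev * (diagonal a * unitri u.2) := by
  calc wAntidiag n * toMat (kuzMap a u)
      = (wAntidiag n * unitri u.1 * wAntidiag n) * (diagonal a * unitri u.2) := by
        change wAntidiag n * (unitri u.1 * wAntidiag n * diagonal a * unitri u.2) = _
        simp only [Matrix.mul_assoc]
    _ = _ := by rw [wAntidiag_mul, mul_wAntidiag, submatrix_submatrix]; rfl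

def kuzInv (a : Fin n → ℝ) (M : MatSpace n) : (UpperIdx n → ℝ) × (UpperIdx n → ℝ) :=
  (fun p => lduUpperEntry a (wAntidiag n * toMat M)ᵀ (Fin.rev p.1.2) (Fin.rev p.1.1),
   fun p => lduUpperEntry a (wAntidiag n * toMat M) p.1.1 p.1.2)

lemma kuzInv_kuzMap {a : Fin n → ℝ} (ha : ∀ i, a i ≠ 0) :
    Function.LeftInverse (kuzInv a) (kuzMap a) := by
  intro u
  have hL := unitri_submatrix_rev_isLowerTriangular u.1
  have hL₁ (i : Fin n) : (unitri u.1).submatrix Fin.rev Fin.rev i i = 1 := unitri_apply_self _ _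
  have hU := unitri_isUpperTriangular u.2
  have hU₁ := unitri_apply_self u.2
  ext p <;> dsimp only [kuzInv] <;> rw [wAntidiag_mul_toMat_kuzMap]
  · rw [lduUpperEntry_transpose_mul_diagonal_mul hL hL₁ hU hU₁ ha]
    simp [unitri_apply_of_lt _ p.2]
  · rw [lduUpperEntry_mul_diagonal_mul hL hL₁ hU hU₁ ha, unitri_apply_of_lt _ p.2]

lemma continuous_kuzMap (a : Fin n → ℝ) : Continuous (kuzMap a) := by
  unfold kuzMap ofMat
  fun_prop

lemma continuous_kuzInv (a : Fin n → ℝ) : Continuous (kuzInv a) := by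
  unfold kuzInv
  fun_prop

lemma abs_wAntidiag_mul_toMat_apply_le (M : MatSpace n) (i j : Fin n) :
    |(wAntidiag n * toMat M) i j| ≤ ‖M‖ := by
  rw [wAntidiag_mul, ← Real.norm_eq_abs]
  exact norm_le_pi_norm M (Fin.rev i, j)

lemma norm_kuzInv_le (a : Fin n → ℝ) (M : MatSpace n) :
    ‖kuzInv a M‖
      ≤ ‖fun k : Fin n => (∏ i : Set.Iic k, a i)⁻¹‖ * (n.factorial * (1 + ‖M‖) ^ n) := by
  have hb : 1 ≤ 1 + ‖M‖ := le_add_of_nonneg_right (norm_nonneg M)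
  have hX (i j : Fin n) : |(wAntidiag n * toMat M) i j| ≤ 1 + ‖M‖ :=
    (abs_wAntidiag_mul_toMat_apply_le M i j).trans (le_add_of_nonneg_left zero_le_one)
  have hentry {X : Matrix (Fin n) (Fin n) ℝ} (hX : ∀ i j, |X i j| ≤ 1 + ‖M‖) (k j : Fin n) :
      ‖lduUpperEntry a X k j‖
        ≤ ‖fun k : Fin n => (∏ i : Set.Iic k, a i)⁻¹‖ * (n.factorial * (1 + ‖M‖) ^ n) := by
    rw [Real.norm_eq_abs]
    refine (abs_lduUpperEntry_le a hb hX k j).trans ?_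
    rw [Fintype.card_fin]
    gcongr
    simpa only [Real.norm_eq_abs] using
      norm_le_pi_norm (fun k : Fin n => (∏ i : Set.Iic k, a i)⁻¹) k
  exact norm_prod_le_iff.2
    ⟨(pi_norm_le_iff_of_nonneg (by positivity)).2 fun _ => hentry (fun i j => hX j i) _ _,
      (pi_norm_le_iff_of_nonneg (by positivity)).2 fun _ => hentry hX _ _⟩

theorem kuzMap_injective_proper_integrable_general (n : ℕ)
    (a : Fin n → ℝ) (ha : ∀ i, a i ≠ 0) :
    Function.Injective (kuzMap a) ∧
    (∀ K : Set (MatSpace n), IsCompact K → IsCompact (kuzMap a ⁻¹' K)) ∧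
    ∀ Φ : SchwartzMap (MatSpace n) ℂ,
      (∫⁻ u : (UpperIdx n → ℝ) × (UpperIdx n → ℝ), ‖Φ (kuzMap a u)‖₊) < ⊤ := by
  have hinv := kuzInv_kuzMap ha
  have hemb : Topology.IsClosedEmbedding (kuzMap a) :=
    hinv.isClosedEmbedding (continuous_kuzInv a) (continuous_kuzMap a)
  refine ⟨hinv.injective, fun K hK => hemb.isCompact_preimage hK, fun Φ => ?_⟩
  have hgrowth (u : (UpperIdx n → ℝ) × (UpperIdx n → ℝ)) :
      ‖u‖ ≤ (‖fun k : Fin n => (∏ i : Set.Iic k, a i)⁻¹‖ * n.factorial)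
        * (1 + ‖kuzMap a u‖) ^ n := by
    simpa [hinv u, mul_assoc] using norm_kuzInv_le a (kuzMap a u)
  -- instance search does not find the product Haar measure
  have : (volume : Measure ((UpperIdx n → ℝ) × (UpperIdx n → ℝ))).IsAddHaarMeasure :=
    Measure.prod.instIsAddHaarMeasure _ _
  simpa only [HasFiniteIntegral, enorm_eq_nnnorm] using
    Φ.hasFiniteIntegral_comp_of_norm_le (μ := volume) hgrowth

/-- For `a = diag(a₁, …, a_n)` with all `aᵢ ≠ 0`, the map `N × N → Mat_n(ℝ)`,
`(n₁, n₂) ↦ n₁ w a n₂`, is injective and proper; consequently, for every Schwartz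
function `Φ` on `Mat_n(ℝ)`, the Kuznetsov orbital integral
`∫_{N×N} |Φ(n₁ w a n₂)| dn₁ dn₂` is finite. -/
theorem kuzMap_injective_proper_integrable (n : ℕ) (hn : 1 ≤ n)
    (a : Fin n → ℝ) (ha : ∀ i, a i ≠ 0) :
    Function.Injective (kuzMap a) ∧
    (∀ K : Set (MatSpace n), IsCompact K → IsCompact (kuzMap a ⁻¹' K)) ∧
    ∀ Φ : SchwartzMap (MatSpace n) ℂ,
      (∫⁻ u : (UpperIdx n → ℝ) × (UpperIdx n → ℝ), ‖Φ (kuzMap a u)‖₊) < ⊤ :=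
  kuzMap_injective_proper_integrable_general n a ha
end
end

section
/- The map F is injective, and its image is exactly the set of pairs (A,B) of real 2×2 matrices satisfying: det A ≠ 0, A_{21} ≠ 0, det B ≠ 0, B_{21} ≠ 0, (AB)_{21} = 1, and (BA)_{21} = 1. (In other words, F parametrizes the open piece M°_{−f,f} of the two-sided Whittaker-reduced cotangent space of Mat_2, exhibiting it as a torsor under the two unipotent parameters (x,y) over the torus parameters (a_1,a_2,b_1,b_2).) -/
noncomputable section

/-- The map `F : (ℝ^×)⁴ × ℝ² → Mat₂(ℝ) × Mat₂(ℝ)` (extended to all of `ℝ⁶`), with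
coordinates `c = (a₁, a₂, b₁, b₂, x, y)`, given by `F = (A, B)` where
`A = w·[[a₁, a₁x], [−a₁y, a₂ − a₁xy]]` and
`B = [[b₁ + a₁⁻²b₂⁻¹ − a₁⁻¹(x−y) − b₂xy, a₁⁻¹ − xb₂], [a₁⁻¹ + yb₂, b₂]]·w`,
with `w = [[0,1],[1,0]]`. -/
def Fmap (c : Fin 6 → ℝ) :
    Matrix (Fin 2) (Fin 2) ℝ × Matrix (Fin 2) (Fin 2) ℝ :=
  (!![(0 : ℝ), 1; 1, 0] * !![c 0, c 0 * c 4; -(c 0 * c 5), c 1 - c 0 * c 4 * c 5],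
   !![c 2 + ((c 0) ^ 2 * c 3)⁻¹ - (c 0)⁻¹ * (c 4 - c 5) - c 3 * c 4 * c 5,
        (c 0)⁻¹ - c 4 * c 3;
      (c 0)⁻¹ + c 5 * c 3, c 3] * !![(0 : ℝ), 1; 1, 0])

/-- The domain `(ℝ^×)⁴ × ℝ²` of `F`: the torus parameters `a₁, a₂, b₁, b₂` are nonzero. -/
def Fdom : Set (Fin 6 → ℝ) :=
  {c | c 0 ≠ 0 ∧ c 1 ≠ 0 ∧ c 2 ≠ 0 ∧ c 3 ≠ 0}

theorem Fmap_eq (c : Fin 6 → ℝ) :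
    Fmap c = (!![-(c 0 * c 5), c 1 - c 0 * c 4 * c 5; c 0, c 0 * c 4],
      !![(c 0)⁻¹ - c 4 * c 3, c 2 + ((c 0) ^ 2 * c 3)⁻¹ - (c 0)⁻¹ * (c 4 - c 5) - c 3 * c 4 * c 5;
         c 3, (c 0)⁻¹ + c 5 * c 3]) := by
  unfold Fmap
  refine Prod.ext ?_ ?_ <;>
  · ext i j
    fin_cases i <;> fin_cases j <;>
      simp [Matrix.mul_apply, Fin.sum_univ_two]

/-- The map `F` is injective on `(ℝ^×)⁴ × ℝ²`, and its image is exactly the set of pairs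
`(A, B)` of real `2 × 2` matrices with `det A ≠ 0`, `A₂₁ ≠ 0`, `det B ≠ 0`, `B₂₁ ≠ 0`,
`(AB)₂₁ = 1`, and `(BA)₂₁ = 1` (lower-left entries). -/
theorem Fmap_injOn_and_image :
    Set.InjOn Fmap Fdom ∧
    Fmap '' Fdom =
      {AB : Matrix (Fin 2) (Fin 2) ℝ × Matrix (Fin 2) (Fin 2) ℝ |
        AB.1.det ≠ 0 ∧ AB.1 1 0 ≠ 0 ∧ AB.2.det ≠ 0 ∧ AB.2 1 0 ≠ 0 ∧
        (AB.1 * AB.2) 1 0 = 1 ∧ (AB.2 * AB.1) 1 0 = 1} := by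
  constructor
  · intro c hc c' hc' h
    rw [Fmap_eq, Fmap_eq, Prod.ext_iff] at h
    obtain ⟨hA, hB⟩ := h
    have e0 : c 0 = c' 0 := by have := congrFun (congrFun hA 1) 0; simpa using this
    have h0' : c' 0 ≠ 0 := e0 ▸ hc.1
    have e3 : c 3 = c' 3 := by have := congrFun (congrFun hB 1) 0; simpa using this
    have e4 : c 4 = c' 4 := by
      have h11 := congrFun (congrFun hA 1) 1
      simp only at h11
      rw [e0] at h11
      simpa using mul_left_cancel₀ h0' (by simpa using h11)
    have e5 : c 5 = c' 5 := by
      have h00 := congrFun (congrFun hA 0) 0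
      simp only at h00
      rw [e0] at h00
      have : c' 0 * c 5 = c' 0 * c' 5 := by
        have := (by simpa using h00 : -(c' 0 * c 5) = -(c' 0 * c' 5))
        linarith
      exact mul_left_cancel₀ h0' this
    have e1 : c 1 = c' 1 := by
      have h01 := congrFun (congrFun hA 0) 1
      simp only at h01
      have : c 1 - c 0 * c 4 * c 5 = c' 1 - c' 0 * c' 4 * c' 5 := by simpa using h01
      rw [e0, e4, e5] at this
      linarith
    have e2 : c 2 = c' 2 := by
      have h01 := congrFun (congrFun hB 0) 1
      simp only at h01
      have : c 2 + ((c 0) ^ 2 * c 3)⁻¹ - (c 0)⁻¹ * (c 4 - c 5) - c 3 * c 4 * c 5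
          = c' 2 + ((c' 0) ^ 2 * c' 3)⁻¹ - (c' 0)⁻¹ * (c' 4 - c' 5) - c' 3 * c' 4 * c' 5 := by
        simpa using h01
      rw [e0, e3, e4, e5] at this
      linarith
    funext i
    fin_cases i
    exacts [e0, e1, e2, e3, e4, e5]
  · ext ⟨A, B⟩
    simp only [Set.mem_image, Set.mem_setOf_eq]
    constructor
    · rintro ⟨c, ⟨h0, h1, h2, h3⟩, heq⟩
      rw [Prod.ext_iff] at heq
      obtain ⟨hA, hB⟩ := heq
      subst hA; subst hB
      rw [Fmap_eq]
      refine ⟨?_, by simp [h0], ?_, by simp [h3], ?_, ?_⟩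
      · have : (!![-(c 0 * c 5), c 1 - c 0 * c 4 * c 5; c 0, c 0 * c 4]).det
            = -(c 0 * c 1) := by simp [Matrix.det_fin_two_of]; ring
        simp only [this]
        exact neg_ne_zero.2 (mul_ne_zero h0 h1)
      · have : (!![(c 0)⁻¹ - c 4 * c 3, c 2 + ((c 0) ^ 2 * c 3)⁻¹ - (c 0)⁻¹ * (c 4 - c 5) - c 3 * c 4 * c 5;
            c 3, (c 0)⁻¹ + c 5 * c 3]).det = -(c 2 * c 3) := by
          simp only [Matrix.det_fin_two_of]
          field_simp
          ring
        simp only [this]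
        exact neg_ne_zero.2 (mul_ne_zero h2 h3)
      · simp [Matrix.mul_apply, Fin.sum_univ_two]
        field_simp
        ring
      · simp [Matrix.mul_apply, Fin.sum_univ_two]
        field_simp
        ring
    · rintro ⟨hdA, hA10, hdB, hB10, hab, hba⟩
      have hab' : A 1 0 * B 0 0 + A 1 1 * B 1 0 = 1 := by
        simpa [Matrix.mul_apply, Fin.sum_univ_two] using hab
      have hba' : B 1 0 * A 0 0 + B 1 1 * A 1 0 = 1 := by
        simpa [Matrix.mul_apply, Fin.sum_univ_two] using hba
      have hB00 : B 0 0 = (1 - A 1 1 * B 1 0) / A 1 0 := by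
        field_simp
        linear_combination hab'
      have hB11 : B 1 1 = (1 - B 1 0 * A 0 0) / A 1 0 := by
        field_simp
        linear_combination hba'
      refine ⟨![A 1 0, -A.det / A 1 0, -B.det / B 1 0, B 1 0, A 1 1 / A 1 0, -(A 0 0) / A 1 0],
        ⟨hA10, div_ne_zero (neg_ne_zero.2 hdA) hA10,
         div_ne_zero (neg_ne_zero.2 hdB) hB10, hB10⟩, ?_⟩
      rw [Fmap_eq]
      have e0 : (![A 1 0, -A.det / A 1 0, -B.det / B 1 0, B 1 0, A 1 1 / A 1 0,
          -(A 0 0) / A 1 0] : Fin 6 → ℝ) 0 = A 1 0 := rfl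
      have e1 : (![A 1 0, -A.det / A 1 0, -B.det / B 1 0, B 1 0, A 1 1 / A 1 0,
          -(A 0 0) / A 1 0] : Fin 6 → ℝ) 1 = -A.det / A 1 0 := rfl
      have e2 : (![A 1 0, -A.det / A 1 0, -B.det / B 1 0, B 1 0, A 1 1 / A 1 0,
          -(A 0 0) / A 1 0] : Fin 6 → ℝ) 2 = -B.det / B 1 0 := rfl
      have e3 : (![A 1 0, -A.det / A 1 0, -B.det / B 1 0, B 1 0, A 1 1 / A 1 0,
          -(A 0 0) / A 1 0] : Fin 6 → ℝ) 3 = B 1 0 := rfl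
      have e4 : (![A 1 0, -A.det / A 1 0, -B.det / B 1 0, B 1 0, A 1 1 / A 1 0,
          -(A 0 0) / A 1 0] : Fin 6 → ℝ) 4 = A 1 1 / A 1 0 := rfl
      have e5 : (![A 1 0, -A.det / A 1 0, -B.det / B 1 0, B 1 0, A 1 1 / A 1 0,
          -(A 0 0) / A 1 0] : Fin 6 → ℝ) 5 = -(A 0 0) / A 1 0 := rfl
      simp only [e0, e1, e2, e3, e4, e5]
      rw [Prod.ext_iff]
      constructor <;>
      · rw [← Matrix.ext_iff]
        simp only [Fin.forall_fin_two]
        refine ⟨⟨?_, ?_⟩, ?_, ?_⟩ <;>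
        · simp only [Matrix.cons_val', Matrix.cons_val_zero, Matrix.cons_val_one,
            Matrix.head_cons, Matrix.empty_val', Matrix.cons_val_fin_one,
            Matrix.head_fin_const, Matrix.det_fin_two, hB00, hB11, Matrix.of_apply]
          all_goals field_simp
          try ring
end
end

section
/- (Weil's formula in the split case, with trivial eighth root of unity.) For every Schwartz function f on ℝ^m × ℝ^m, ∬_{ℝ^m×ℝ^m} 𝓕f(ξ,η) e^{2πi ξ·η} dξ dη = ∬_{ℝ^m×ℝ^m} f(x,y) e^{−2πi x·y} dx dy, where both double integrals converge absolutely. -/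
open MeasureTheory Complex

noncomputable section

/-- The Fourier transform of a function on `ℝ^m × ℝ^m`:
`𝓕f(ξ,η) = ∬ f(x,y) e^{−2πi(x·ξ + y·η)} dx dy`. -/
def fourierRmRm (m : ℕ) (f : (Fin m → ℝ) × (Fin m → ℝ) → ℂ)
    (ξ η : Fin m → ℝ) : ℂ :=
  ∫ z : (Fin m → ℝ) × (Fin m → ℝ),
    f z * Complex.exp (-(2 * Real.pi * Complex.I) *
      ((∑ i, z.1 i * ξ i) + (∑ i, z.2 i * η i) : ℝ))

open SchwartzMap
open scoped FourierTransform

namespace WeilAux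

lemma norm_exp_neg (c : ℝ) : ‖Complex.exp (-(2 * Real.pi * Complex.I) * (c : ℂ))‖ = 1 := by
  rw [Complex.norm_exp]
  have : (-(2 * Real.pi * Complex.I) * (c : ℂ)).re = 0 := by simp
  rw [this, Real.exp_zero]

lemma norm_exp_pos (c : ℝ) : ‖Complex.exp ((2 * Real.pi * Complex.I) * (c : ℂ))‖ = 1 := by
  rw [Complex.norm_exp]
  have : ((2 * Real.pi * Complex.I) * (c : ℂ)).re = 0 := by simp
  rw [this, Real.exp_zero]

/-- multiplying an integrable function by a unimodular measurable phase stays integrable -/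
lemma Integrable.mul_unit {α : Type*} [MeasurableSpace α] {μ : Measure α} {F φ : α → ℂ}
    (h : Integrable F μ) (hφ : AEStronglyMeasurable φ μ) (hn : ∀ a, ‖φ a‖ = 1) :
    Integrable (fun a => F a * φ a) μ := by
  refine h.norm.mono' (h.aestronglyMeasurable.mul hφ)
    (Filter.Eventually.of_forall fun a => ?_)
  rw [norm_mul, hn a, mul_one]

instance prodVolumeIsAddHaar (m : ℕ) :
    (volume : Measure ((Fin m → ℝ) × (Fin m → ℝ))).IsAddHaarMeasure :=
  (Measure.prod.instIsAddHaarMeasure _ _ :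
    ((volume : Measure (Fin m → ℝ)).prod (volume : Measure (Fin m → ℝ))).IsAddHaarMeasure)

lemma integrable_inv_pow (m : ℕ) :
    Integrable (fun x : Fin m → ℝ => ((1 + ‖x‖) ^ (m + 1) : ℝ)⁻¹) := by
  have h : ((Module.finrank ℝ (Fin m → ℝ) : ℝ)) < ((m+1 : ℕ) : ℝ) := by
    rw [Module.finrank_fintype_fun_eq_card, Fintype.card_fin]
    exact_mod_cast lt_add_one m
  have := integrable_one_add_norm (E := Fin m → ℝ) (μ := volume) (r := ((m+1 : ℕ) : ℝ)) h
  refine this.congr (Filter.Eventually.of_forall fun x => ?_)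
  simp only []
  rw [Real.rpow_neg (by positivity : (0:ℝ) ≤ 1 + ‖x‖), Real.rpow_natCast]

lemma integrable_inv_pow_E (m : ℕ) :
    Integrable (fun x : EuclideanSpace ℝ (Fin m) => ((1 + ‖x‖) ^ (m + 1) : ℝ)⁻¹) := by
  have h : ((Module.finrank ℝ (EuclideanSpace ℝ (Fin m)) : ℝ)) < ((m+1 : ℕ) : ℝ) := by
    rw [finrank_euclideanSpace, Fintype.card_fin]
    exact_mod_cast lt_add_one m
  have := integrable_one_add_norm (E := EuclideanSpace ℝ (Fin m)) (μ := volume)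
    (r := ((m+1 : ℕ) : ℝ)) h
  refine this.congr (Filter.Eventually.of_forall fun x => ?_)
  simp only []
  rw [Real.rpow_neg (by positivity : (0:ℝ) ≤ 1 + ‖x‖), Real.rpow_natCast]

/-- decay of a Schwartz function in each factor of a product -/
lemma schwartz_prod_decay (m : ℕ) (f : SchwartzMap ((Fin m → ℝ) × (Fin m → ℝ)) ℂ) :
    ∃ C : ℝ, 0 ≤ C ∧ ∀ z : (Fin m → ℝ) × (Fin m → ℝ),
      ‖f z‖ ≤ C * (((1 + ‖z.1‖) ^ (m + 1) : ℝ)⁻¹ * ((1 + ‖z.2‖) ^ (m + 1) : ℝ)⁻¹) := by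
  set k := 2 * (m + 1)
  set C : ℝ := 2 ^ k * (Finset.Iic (k, 0)).sup (fun p => SchwartzMap.seminorm ℝ p.1 p.2) f with hC
  refine ⟨C, by positivity, fun z => ?_⟩
  have key : (1 + ‖z‖) ^ k * ‖f z‖ ≤ C := by
    have := one_add_le_sup_seminorm_apply (𝕜 := ℝ) (m := (k, 0)) le_rfl le_rfl f z
    rwa [norm_iteratedFDeriv_zero] at this
  have h1 : (0:ℝ) < (1 + ‖z.1‖) ^ (m+1) := by positivity
  have h2 : (0:ℝ) < (1 + ‖z.2‖) ^ (m+1) := by positivity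
  have hle : (1 + ‖z.1‖) ^ (m+1) * (1 + ‖z.2‖) ^ (m+1) ≤ (1 + ‖z‖) ^ k := by
    calc (1 + ‖z.1‖) ^ (m+1) * (1 + ‖z.2‖) ^ (m+1)
        ≤ (1 + ‖z‖) ^ (m+1) * (1 + ‖z‖) ^ (m+1) :=
          mul_le_mul (pow_le_pow_left₀ (by positivity) (by linarith [norm_fst_le z]) _)
            (pow_le_pow_left₀ (by positivity) (by linarith [norm_snd_le z]) _)
            (by positivity) (by positivity)
      _ = (1 + ‖z‖) ^ k := by rw [← pow_add]; congr 1; omega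
  have hfz : ‖f z‖ * ((1 + ‖z.1‖) ^ (m+1) * (1 + ‖z.2‖) ^ (m+1)) ≤ C := by
    calc ‖f z‖ * ((1 + ‖z.1‖) ^ (m+1) * (1 + ‖z.2‖) ^ (m+1))
        ≤ ‖f z‖ * (1 + ‖z‖) ^ k := by gcongr
      _ = (1 + ‖z‖) ^ k * ‖f z‖ := mul_comm _ _
      _ ≤ C := key
  have heq : C * (((1 + ‖z.1‖) ^ (m + 1) : ℝ)⁻¹ * ((1 + ‖z.2‖) ^ (m + 1) : ℝ)⁻¹)
      = C / ((1 + ‖z.1‖) ^ (m+1) * (1 + ‖z.2‖) ^ (m+1)) := by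
    field_simp
  rw [heq, le_div_iff₀ (by positivity)]
  exact hfz

/-- one-variable decay of a Schwartz function -/
lemma schwartz_decay {V : Type*} [NormedAddCommGroup V] [NormedSpace ℝ V] (k : ℕ)
    (g : SchwartzMap V ℂ) :
    ∃ C : ℝ, 0 ≤ C ∧ ∀ w : V, ‖g w‖ ≤ C * ((1 + ‖w‖) ^ k : ℝ)⁻¹ := by
  set C : ℝ := 2 ^ k * (Finset.Iic (k, 0)).sup (fun p => SchwartzMap.seminorm ℝ p.1 p.2) g
  refine ⟨C, by positivity, fun w => ?_⟩
  have key : (1 + ‖w‖) ^ k * ‖g w‖ ≤ C := by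
    have := one_add_le_sup_seminorm_apply (𝕜 := ℝ) (m := (k, 0)) le_rfl le_rfl g w
    rwa [norm_iteratedFDeriv_zero] at this
  rw [mul_comm C, ← div_eq_inv_mul, le_div_iff₀ (by positivity)]
  linarith [key]

variable (m : ℕ)

abbrev Wm := EuclideanSpace ℝ (Fin m ⊕ Fin m)
abbrev Em := EuclideanSpace ℝ (Fin m)

def Lm : Wm m ≃L[ℝ] (Fin m → ℝ) × (Fin m → ℝ) :=
  ((WithLp.linearEquiv 2 ℝ (Fin m ⊕ Fin m → ℝ)).trans
    (LinearEquiv.sumArrowLequivProdArrow _ _ ℝ ℝ)).toContinuousLinearEquiv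

def ψm : ((Fin m → ℝ) × (Fin m → ℝ)) ≃ᵐ Wm m :=
  (MeasurableEquiv.sumPiEquivProdPi (fun _ : Fin m ⊕ Fin m => ℝ)).symm.trans
    ((MeasurableEquiv.toLp 2 (Fin m ⊕ Fin m → ℝ)).symm).symm

lemma ψm_coe : ⇑(ψm m) = ⇑(Lm m).symm := by
  funext z; refine PiLp.ext fun i => ?_; cases i <;> rfl

lemma hψ : MeasurePreserving (⇑(Lm m).symm)
    (volume : Measure ((Fin m → ℝ) × (Fin m → ℝ))) volume := by
  rw [← ψm_coe]
  exact ((EuclideanSpace.volume_preserving_symm_measurableEquiv_toLp (Fin m ⊕ Fin m)).symm).comp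
    (volume_measurePreserving_sumPiEquivProdPi_symm (fun _ : Fin m ⊕ Fin m => ℝ))

def Fm (f : SchwartzMap ((Fin m → ℝ) × (Fin m → ℝ)) ℂ) : SchwartzMap (Wm m) ℂ :=
  SchwartzMap.compCLMOfContinuousLinearEquiv ℝ (Lm m) f

lemma inner_psi (z w : (Fin m → ℝ) × (Fin m → ℝ)) :
    (inner ℝ ((Lm m).symm z) ((Lm m).symm w) : ℝ)
      = (∑ i, z.1 i * w.1 i) + (∑ i, z.2 i * w.2 i) := by
  rw [PiLp.inner_apply, Fintype.sum_sum_type]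
  simp only [RCLike.inner_apply, conj_trivial]
  congr 1 <;> exact Finset.sum_congr rfl fun i _ => mul_comm _ _

lemma fourier_psi (f : SchwartzMap ((Fin m → ℝ) × (Fin m → ℝ)) ℂ)
    (w : (Fin m → ℝ) × (Fin m → ℝ)) :
    𝓕 (⇑(Fm m f)) ((Lm m).symm w) = fourierRmRm m (⇑f) w.1 w.2 := by
  rw [Real.fourier_eq']
  rw [← (hψ m).integral_comp ((Lm m).symm.toHomeomorph.measurableEmbedding)]
  refine integral_congr_ae (Filter.Eventually.of_forall fun z => ?_)
  dsimp only
  have h1 : (Fm m f) ((Lm m).symm z) = f z := by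
    simp only [Fm, SchwartzMap.compCLMOfContinuousLinearEquiv_apply, Function.comp_apply]
    rw [(Lm m).apply_symm_apply]
  rw [h1, inner_psi, smul_eq_mul, mul_comm]
  congr 1
  push_cast
  ring

lemma phase_cont (w : Fin m → ℝ) (c : ℂ) :
    Continuous fun x : Fin m → ℝ => Complex.exp (c * ((∑ i, x i * w i : ℝ) : ℂ)) := by
  refine Complex.continuous_exp.comp (continuous_const.mul (Complex.continuous_ofReal.comp ?_))
  exact continuous_finset_sum _ fun i _ => (continuous_apply i).mul continuous_const

lemma phase_cont2 (c : ℂ) :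
    Continuous fun z : (Fin m → ℝ) × (Fin m → ℝ) =>
      Complex.exp (c * ((∑ i, z.1 i * z.2 i : ℝ) : ℂ)) := by
  refine Complex.continuous_exp.comp (continuous_const.mul (Complex.continuous_ofReal.comp ?_))
  exact continuous_finset_sum _ fun i _ =>
    ((continuous_apply i).comp continuous_fst).mul ((continuous_apply i).comp continuous_snd)

lemma key (f : SchwartzMap ((Fin m → ℝ) × (Fin m → ℝ)) ℂ) (ξ : Fin m → ℝ) :
    (∫ η : Fin m → ℝ, 𝓕 (⇑(Fm m f)) ((Lm m).symm (ξ, η)) *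
        Complex.exp ((2 * Real.pi * Complex.I) * ((∑ i, ξ i * η i : ℝ))))
      = ∫ x : Fin m → ℝ, f (x, ξ) *
          Complex.exp (-(2 * Real.pi * Complex.I) * ((∑ i, x i * ξ i : ℝ))) := by
  obtain ⟨C, hC0, hC⟩ := schwartz_prod_decay m f
  set eq := (MeasurableEquiv.toLp 2 (Fin m → ℝ)).symm with heqdef
  have hEP : MeasurePreserving (⇑eq) volume volume :=
    EuclideanSpace.volume_preserving_symm_measurableEquiv_toLp (Fin m)
  set α := EuclideanSpace.equiv (Fin m) ℝ with hαdef
  set g : Em m → ℂ := fun y => ∫ x : Fin m → ℝ, f (x, eq y) *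
    Complex.exp (-(2 * Real.pi * Complex.I) * ((∑ i, x i * ξ i : ℝ))) with hgdef
  -- norm bound on the integrand
  have hbound : ∀ y x : Fin m → ℝ,
      ‖f (x, y) * Complex.exp (-(2 * Real.pi * Complex.I) * ((∑ i, x i * ξ i : ℝ)))‖
        ≤ C * (((1 + ‖x‖) ^ (m + 1) : ℝ)⁻¹ * ((1 + ‖y‖) ^ (m + 1) : ℝ)⁻¹) := by
    intro y x
    rw [norm_mul, norm_exp_neg, mul_one]
    exact hC (x, y)
  have hone : ∀ y : Fin m → ℝ, ((1 + ‖y‖) ^ (m + 1) : ℝ)⁻¹ ≤ 1 := by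
    intro y
    rw [inv_le_one_iff₀]
    right
    exact one_le_pow₀ (by linarith [norm_nonneg y])
  -- continuity of g
  have hg_cont : Continuous g := by
    rw [hgdef]
    refine continuous_of_dominated (F := fun (y : Em m) (x : Fin m → ℝ) =>
        f (x, eq y) * Complex.exp (-(2 * Real.pi * Complex.I) * ((∑ i, x i * ξ i : ℝ))))
      (bound := fun x => C * ((1 + ‖x‖) ^ (m + 1) : ℝ)⁻¹) ?_ ?_ ?_ ?_
    · intro y
      exact ((f.continuous.comp (continuous_id.prodMk continuous_const)).mul
        (phase_cont m ξ _)).aestronglyMeasurable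
    · intro y
      refine Filter.Eventually.of_forall fun x => ?_
      calc ‖f (x, eq y) * Complex.exp (-(2 * Real.pi * Complex.I) * ((∑ i, x i * ξ i : ℝ)))‖
          ≤ C * (((1 + ‖x‖) ^ (m + 1) : ℝ)⁻¹ * ((1 + ‖eq y‖) ^ (m + 1) : ℝ)⁻¹) := hbound _ x
        _ ≤ C * (((1 + ‖x‖) ^ (m + 1) : ℝ)⁻¹ * 1) := by
            gcongr
            exact hone _
        _ = C * ((1 + ‖x‖) ^ (m + 1) : ℝ)⁻¹ := by ring
    · exact (integrable_inv_pow m).const_mul C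
    · refine Filter.Eventually.of_forall fun x => ?_
      exact (f.continuous.comp (continuous_const.prodMk α.continuous)).mul continuous_const
  have hgPm : ∀ y : Fin m → ℝ, g (eq.symm y) = ∫ x : Fin m → ℝ, f (x, y) *
      Complex.exp (-(2 * Real.pi * Complex.I) * ((∑ i, x i * ξ i : ℝ))) := by
    intro y
    simp only [hgdef]
    rw [MeasurableEquiv.apply_symm_apply]
  -- integrability of g
  set I0 : ℝ := ∫ x : Fin m → ℝ, ((1 + ‖x‖) ^ (m + 1) : ℝ)⁻¹ with hI0def
  have hg_norm : ∀ y : Fin m → ℝ,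
      ‖g (eq.symm y)‖ ≤ (C * I0) * ((1 + ‖y‖) ^ (m + 1) : ℝ)⁻¹ := by
    intro y
    rw [hgPm y]
    have hb : Integrable (fun x : Fin m → ℝ =>
        (C * ((1 + ‖y‖) ^ (m + 1) : ℝ)⁻¹) * ((1 + ‖x‖) ^ (m + 1) : ℝ)⁻¹) :=
      (integrable_inv_pow m).const_mul _
    have := norm_integral_le_of_norm_le hb (Filter.Eventually.of_forall fun x => by
      calc ‖f (x, y) * Complex.exp (-(2 * Real.pi * Complex.I) * ((∑ i, x i * ξ i : ℝ)))‖
          ≤ C * (((1 + ‖x‖) ^ (m + 1) : ℝ)⁻¹ * ((1 + ‖y‖) ^ (m + 1) : ℝ)⁻¹) := hbound y x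
        _ = (C * ((1 + ‖y‖) ^ (m + 1) : ℝ)⁻¹) * ((1 + ‖x‖) ^ (m + 1) : ℝ)⁻¹ := by ring)
    refine this.trans (le_of_eq ?_)
    rw [integral_const_mul]
    ring
  have hg_int : Integrable g := by
    have h1 : Integrable (fun y : Fin m → ℝ => g (eq.symm y)) := by
      refine Integrable.mono' (((integrable_inv_pow m).const_mul (C * I0)))
        ((hg_cont.comp α.symm.continuous).aestronglyMeasurable)
        (Filter.Eventually.of_forall fun y => hg_norm y)
    have h2 := (hEP.symm eq).integrable_comp_emb eq.symm.measurableEmbedding (g := g)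
    rw [← h2]
    exact h1
  -- Fubini-type integrability on the product
  have hf_phase_int : ∀ η : Fin m → ℝ, Integrable (fun z : (Fin m → ℝ) × (Fin m → ℝ) =>
      f z * Complex.exp (-(2 * Real.pi * Complex.I) *
        (((∑ i, z.1 i * ξ i) + (∑ i, z.2 i * η i) : ℝ)))) := by
    intro η
    refine Integrable.mul_unit f.integrable ?_ (fun z => norm_exp_neg _)
    refine (Complex.continuous_exp.comp (continuous_const.mul
      (Complex.continuous_ofReal.comp ?_))).aestronglyMeasurable
    refine Continuous.add ?_ ?_
    · exact continuous_finset_sum _ fun i _ =>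
        ((continuous_apply i).comp continuous_fst).mul continuous_const
    · exact continuous_finset_sum _ fun i _ =>
        ((continuous_apply i).comp continuous_snd).mul continuous_const
  -- identification of the Fourier transform of g
  have hFg : 𝓕 g = fun η : Em m => 𝓕 (⇑(Fm m f)) ((Lm m).symm (ξ, eq η)) := by
    funext η
    rw [fourier_psi]
    rw [Real.fourier_eq']
    rw [← (hEP.symm eq).integral_comp eq.symm.measurableEmbedding]
    unfold fourierRmRm
    rw [show (volume : Measure ((Fin m → ℝ) × (Fin m → ℝ))) = volume.prod volume from rfl]
    rw [integral_prod_symm _ (by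
      have := hf_phase_int (eq η)
      rwa [show (volume : Measure ((Fin m → ℝ) × (Fin m → ℝ))) = volume.prod volume from rfl]
        at this)]
    refine integral_congr_ae (Filter.Eventually.of_forall fun y => ?_)
    dsimp only
    rw [hgPm y, smul_eq_mul, ← integral_const_mul]
    refine integral_congr_ae (Filter.Eventually.of_forall fun x => ?_)
    dsimp only
    rw [mul_comm (Complex.exp _), mul_assoc, ← Complex.exp_add]
    congr 1
    have hinner : (inner ℝ (eq.symm y) η : ℝ) = ∑ i, y i * (eq η) i := by
      rw [PiLp.inner_apply]
      simp only [RCLike.inner_apply, conj_trivial]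
      exact Finset.sum_congr rfl fun i _ => mul_comm _ _
    rw [hinner]
    push_cast
    ring
  -- integrability of 𝓕 g
  have h𝓕g_int : Integrable (𝓕 g) := by
    rw [hFg]
    obtain ⟨C₂, hC₂0, hC₂⟩ := schwartz_decay (m + 1)
      (SchwartzMap.fourierTransformCLM ℂ (Fm m f))
    have hnorm : ∀ η : Em m, ‖η‖ ≤ ‖(Lm m).symm (ξ, eq η)‖ := by
      intro η
      rw [EuclideanSpace.norm_eq, EuclideanSpace.norm_eq]
      refine Real.sqrt_le_sqrt ?_
      rw [Fintype.sum_sum_type]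
      have h1 : ∀ i, ((Lm m).symm (ξ, eq η) : Wm m) (Sum.inr i) = η i := fun _ => rfl
      simp only [h1]
      exact le_add_of_nonneg_left (Finset.sum_nonneg fun i _ => by positivity)
    refine Integrable.mono' ((integrable_inv_pow_E m).const_mul C₂)
      ?_ (Filter.Eventually.of_forall fun η => ?_)
    · exact (((SchwartzMap.fourierTransformCLM ℂ (Fm m f)) :
        SchwartzMap (Wm m) ℂ).continuous.comp
        ((Lm m).symm.continuous.comp (continuous_const.prodMk α.continuous))).aestronglyMeasurable
    · calc ‖𝓕 (⇑(Fm m f)) ((Lm m).symm (ξ, eq η))‖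
          ≤ C₂ * ((1 + ‖(Lm m).symm (ξ, eq η)‖) ^ (m + 1) : ℝ)⁻¹ := hC₂ _
        _ ≤ C₂ * ((1 + ‖η‖) ^ (m + 1) : ℝ)⁻¹ := by
            gcongr
            exact hnorm η
  -- Fourier inversion
  have hinv : 𝓕⁻ (𝓕 g) = g := hg_cont.fourierInv_fourier_eq hg_int h𝓕g_int
  -- final chain
  calc (∫ η : Fin m → ℝ, 𝓕 (⇑(Fm m f)) ((Lm m).symm (ξ, η)) *
        Complex.exp ((2 * Real.pi * Complex.I) * ((∑ i, ξ i * η i : ℝ))))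
      = ∫ η : Em m, 𝓕 (⇑(Fm m f)) ((Lm m).symm (ξ, eq η)) *
          Complex.exp ((2 * Real.pi * Complex.I) * ((∑ i, ξ i * (eq η) i : ℝ))) := by
        rw [← hEP.integral_comp eq.measurableEmbedding]
    _ = ∫ η : Em m, Complex.exp (((2 * Real.pi * (inner ℝ η (eq.symm ξ) : ℝ) : ℝ) : ℂ)
          * Complex.I) • 𝓕 g η := by
        refine integral_congr_ae (Filter.Eventually.of_forall fun η => ?_)
        rw [hFg]
        dsimp only
        rw [smul_eq_mul, mul_comm]
        congr 1
        have hinner : (inner ℝ η (eq.symm ξ) : ℝ) = ∑ i, (eq η) i * ξ i := by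
          rw [PiLp.inner_apply]
          simp only [RCLike.inner_apply, conj_trivial]
          exact Finset.sum_congr rfl fun i _ => mul_comm _ _
        rw [hinner, show (∑ i, ξ i * (eq η) i) = ∑ i, (eq η) i * ξ i from
          Finset.sum_congr rfl fun i _ => mul_comm _ _]
        push_cast
        ring
    _ = 𝓕⁻ (𝓕 g) (eq.symm ξ) := (Real.fourierInv_eq' _ _).symm
    _ = g (eq.symm ξ) := by rw [hinv]
    _ = _ := hgPm ξ

end WeilAux

open WeilAux in
/-- Weil's formula in the split case, with trivial eighth root of unity: for every
Schwartz function `f` on `ℝ^m × ℝ^m`,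
`∬ 𝓕f(ξ,η) e^{2πi ξ·η} dξ dη = ∬ f(x,y) e^{−2πi x·y} dx dy`,
where both double integrals converge absolutely. -/
theorem weil_formula (m : ℕ) (f : SchwartzMap ((Fin m → ℝ) × (Fin m → ℝ)) ℂ) :
    Integrable (fun z : (Fin m → ℝ) × (Fin m → ℝ) =>
      fourierRmRm m f z.1 z.2 *
        Complex.exp ((2 * Real.pi * Complex.I) * ((∑ i, z.1 i * z.2 i : ℝ)))) ∧
    Integrable (fun z : (Fin m → ℝ) × (Fin m → ℝ) =>
      f z * Complex.exp (-(2 * Real.pi * Complex.I) * ((∑ i, z.1 i * z.2 i : ℝ)))) ∧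
    (∫ z : (Fin m → ℝ) × (Fin m → ℝ),
      fourierRmRm m f z.1 z.2 *
        Complex.exp ((2 * Real.pi * Complex.I) * ((∑ i, z.1 i * z.2 i : ℝ))))
      = ∫ z : (Fin m → ℝ) × (Fin m → ℝ),
          f z * Complex.exp (-(2 * Real.pi * Complex.I) * ((∑ i, z.1 i * z.2 i : ℝ))) := by
  have hψemb : MeasurableEmbedding ⇑(Lm m).symm :=
    (Lm m).symm.toHomeomorph.measurableEmbedding
  have hGint : Integrable (fun z : (Fin m → ℝ) × (Fin m → ℝ) =>
      𝓕 (⇑(Fm m f)) ((Lm m).symm z)) :=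
    ((hψ m).integrable_comp_emb hψemb).mpr
      (SchwartzMap.integrable (SchwartzMap.fourierTransformCLM ℂ (Fm m f)))
  have hInt1 : Integrable (fun z : (Fin m → ℝ) × (Fin m → ℝ) =>
      𝓕 (⇑(Fm m f)) ((Lm m).symm z) *
        Complex.exp ((2 * Real.pi * Complex.I) * ((∑ i, z.1 i * z.2 i : ℝ)))) :=
    Integrable.mul_unit hGint
      (phase_cont2 m (2 * Real.pi * Complex.I)).aestronglyMeasurable
      (fun z => norm_exp_pos _)
  have hInt1' : Integrable (fun z : (Fin m → ℝ) × (Fin m → ℝ) =>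
      fourierRmRm m f z.1 z.2 *
        Complex.exp ((2 * Real.pi * Complex.I) * ((∑ i, z.1 i * z.2 i : ℝ)))) :=
    hInt1.congr (Filter.Eventually.of_forall fun z => by dsimp only; rw [fourier_psi m f z])
  have hInt2 : Integrable (fun z : (Fin m → ℝ) × (Fin m → ℝ) =>
      f z * Complex.exp (-(2 * Real.pi * Complex.I) * ((∑ i, z.1 i * z.2 i : ℝ)))) :=
    Integrable.mul_unit f.integrable
      (phase_cont2 m (-(2 * Real.pi * Complex.I))).aestronglyMeasurable
      (fun z => norm_exp_neg _)
  refine ⟨hInt1', hInt2, ?_⟩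
  calc (∫ z : (Fin m → ℝ) × (Fin m → ℝ),
        fourierRmRm m f z.1 z.2 *
          Complex.exp ((2 * Real.pi * Complex.I) * ((∑ i, z.1 i * z.2 i : ℝ))))
      = ∫ z : (Fin m → ℝ) × (Fin m → ℝ),
          𝓕 (⇑(Fm m f)) ((Lm m).symm z) *
            Complex.exp ((2 * Real.pi * Complex.I) * ((∑ i, z.1 i * z.2 i : ℝ))) :=
        integral_congr_ae (Filter.Eventually.of_forall fun z => by dsimp only; rw [fourier_psi m f z])
    _ = ∫ ξ : Fin m → ℝ, ∫ η : Fin m → ℝ, 𝓕 (⇑(Fm m f)) ((Lm m).symm (ξ, η)) *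
          Complex.exp ((2 * Real.pi * Complex.I) * ((∑ i, ξ i * η i : ℝ))) := by
        have h := hInt1
        rw [show (volume : Measure ((Fin m → ℝ) × (Fin m → ℝ))) = volume.prod volume from rfl]
          at h ⊢
        exact integral_prod _ h
    _ = ∫ ξ : Fin m → ℝ, ∫ x : Fin m → ℝ, f (x, ξ) *
          Complex.exp (-(2 * Real.pi * Complex.I) * ((∑ i, x i * ξ i : ℝ))) :=
        integral_congr_ae (Filter.Eventually.of_forall fun ξ => key m f ξ)
    _ = ∫ z : (Fin m → ℝ) × (Fin m → ℝ),
          f z * Complex.exp (-(2 * Real.pi * Complex.I) * ((∑ i, z.1 i * z.2 i : ℝ))) := by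
        have h := hInt2
        rw [show (volume : Measure ((Fin m → ℝ) × (Fin m → ℝ))) = volume.prod volume from rfl]
          at h ⊢
        exact (integral_prod_symm _ h).symm
end
end

section
/- In the Coxeter group of type B_n (the Weyl group of type C_n), let u = s_2 s_3 ⋯ s_{n−1} s_n s_{n−1} ⋯ s_3 s_2 (so u = s_2 when n = 2). Then the word u s_1 u, of 4n − 5 letters, is reduced; that is, ℓ(u s_1 u) = 4n − 5 = 2 ℓ(u) + 1. (This is the instance of Lemma 2.5 of the paper for the rank-one spherical variety Sp_{2n−2} × Sp_2 \ Sp_{2n}: the element w = w_1^{−1} w′ w_1 generating the little Weyl group W_X, with w_1 = u and w′ = s_1, has length 2 ℓ(w_1) + ℓ(w′) = 4n − 5.) -/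
/-- The word `u = s₂ s₃ ⋯ s_{n−1} s_n s_{n−1} ⋯ s₃ s₂` in the generators of the Coxeter
group of type `Bₙ`, written as a list of (0-based) indices: `[1, 2, …, n−1, n−2, …, 1]`. -/
def uWordB (n : ℕ) : List (Fin n) :=
  (List.finRange n).tail ++ ((List.finRange n).tail).reverse.tail

namespace BnAux

/-! ### The piecewise functions -/

def tFun (k : ℕ) (x : ℤ) : ℤ :=
  if x = (k:ℤ)+1 then (k:ℤ)+2 else if x = (k:ℤ)+2 then (k:ℤ)+1
  else if x = -((k:ℤ)+1) then -((k:ℤ)+2) else if x = -((k:ℤ)+2) then -((k:ℤ)+1) else x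

def nuFun (x : ℤ) : ℤ := if x = 1 then -1 else if x = -1 then 1 else x

def fFun (m : ℕ) (x : ℤ) : ℤ := if x = (m:ℤ) then -(m:ℤ) else if x = -(m:ℤ) then (m:ℤ) else x

theorem teq1 (k : ℕ) {x : ℤ} (h : x = (k:ℤ)+1) : tFun k x = (k:ℤ)+2 := by
  simp only [tFun]; split_ifs <;> omega
theorem teq2 (k : ℕ) {x : ℤ} (h : x = (k:ℤ)+2) : tFun k x = (k:ℤ)+1 := by
  simp only [tFun]; split_ifs <;> omega
theorem teq3 (k : ℕ) {x : ℤ} (h : x = -((k:ℤ)+1)) : tFun k x = -((k:ℤ)+2) := by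
  simp only [tFun]; split_ifs <;> omega
theorem teq4 (k : ℕ) {x : ℤ} (h : x = -((k:ℤ)+2)) : tFun k x = -((k:ℤ)+1) := by
  simp only [tFun]; split_ifs <;> omega
theorem teq5 (k : ℕ) {x : ℤ} (h1 : x ≠ (k:ℤ)+1) (h2 : x ≠ (k:ℤ)+2)
    (h3 : x ≠ -((k:ℤ)+1)) (h4 : x ≠ -((k:ℤ)+2)) : tFun k x = x := by
  simp only [tFun]; split_ifs <;> omega
theorem nq1 {x : ℤ} (h : x = 1) : nuFun x = -1 := by simp only [nuFun]; split_ifs <;> omega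
theorem nq2 {x : ℤ} (h : x = -1) : nuFun x = 1 := by simp only [nuFun]; split_ifs <;> omega
theorem nq3 {x : ℤ} (h1 : x ≠ 1) (h2 : x ≠ -1) : nuFun x = x := by
  simp only [nuFun]; split_ifs <;> omega
theorem fq1 (m : ℕ) {x : ℤ} (h : x = (m:ℤ)) : fFun m x = -(m:ℤ) := by
  simp only [fFun]; split_ifs <;> omega
theorem fq2 (m : ℕ) {x : ℤ} (h : x = -(m:ℤ)) : fFun m x = (m:ℤ) := by
  simp only [fFun]; split_ifs <;> omega
theorem fq3 (m : ℕ) {x : ℤ} (h1 : x ≠ (m:ℤ)) (h2 : x ≠ -(m:ℤ)) : fFun m x = x := by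
  simp only [fFun]; split_ifs <;> omega

theorem tFun_invol (k : ℕ) : Function.Involutive (tFun k) := by
  intro x
  have H : x = (k:ℤ)+1 ∨ x = (k:ℤ)+2 ∨ x = -((k:ℤ)+1) ∨ x = -((k:ℤ)+2)
      ∨ (x ≠ (k:ℤ)+1 ∧ x ≠ (k:ℤ)+2 ∧ x ≠ -((k:ℤ)+1) ∧ x ≠ -((k:ℤ)+2)) := by omega
  rcases H with rfl|rfl|rfl|rfl|⟨h1,h2,h3,h4⟩ <;>
    simp (disch := omega) only [teq1, teq2, teq3, teq4, teq5]

theorem nuFun_invol : Function.Involutive nuFun := by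
  intro x
  have H : x = 1 ∨ x = -1 ∨ (x ≠ 1 ∧ x ≠ -1) := by omega
  rcases H with rfl|rfl|⟨h1,h2⟩ <;> simp (disch := omega) only [nq1, nq2, nq3]

theorem fFun_invol (m : ℕ) : Function.Involutive (fFun m) := by
  intro x
  have H : x = (m:ℤ) ∨ x = -(m:ℤ) ∨ (x ≠ (m:ℤ) ∧ x ≠ -(m:ℤ)) := by omega
  rcases H with rfl|rfl|⟨h1,h2⟩ <;> simp (disch := omega) only [fq1, fq2, fq3] <;> omega

/-! ### The permutations -/

def tP (k : ℕ) : Equiv.Perm ℤ := (tFun_invol k).toPerm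
def nuP : Equiv.Perm ℤ := nuFun_invol.toPerm
def fP (m : ℕ) : Equiv.Perm ℤ := (fFun_invol m).toPerm

@[simp] theorem tP_apply (k : ℕ) (x : ℤ) : tP k x = tFun k x := rfl
@[simp] theorem nuP_apply (x : ℤ) : nuP x = nuFun x := rfl
@[simp] theorem fP_apply (m : ℕ) (x : ℤ) : fP m x = fFun m x := rfl

theorem tP_mul_self (k : ℕ) : tP k * tP k = 1 := by
  ext x; simp only [Equiv.Perm.mul_apply, tP_apply, Equiv.Perm.one_apply]
  exact tFun_invol k x

theorem nuP_mul_self : nuP * nuP = 1 := by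
  ext x; simp only [Equiv.Perm.mul_apply, nuP_apply, Equiv.Perm.one_apply]
  exact nuFun_invol x

theorem fP_mul_self (m : ℕ) : fP m * fP m = 1 := by
  ext x; simp only [Equiv.Perm.mul_apply, fP_apply, Equiv.Perm.one_apply]
  exact fFun_invol m x

theorem tP_inv (k : ℕ) : (tP k)⁻¹ = tP k := inv_eq_of_mul_eq_one_right (tP_mul_self k)

theorem t_braid (k : ℕ) : tP k * tP (k+1) * tP k = tP (k+1) * tP k * tP (k+1) := by
  ext x
  simp only [Equiv.Perm.mul_apply, tP_apply]
  have H : x = (k:ℤ)+1 ∨ x = (k:ℤ)+2 ∨ x = (k:ℤ)+3 ∨ x = -((k:ℤ)+1) ∨ x = -((k:ℤ)+2)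
      ∨ x = -((k:ℤ)+3) ∨ (x ≠ (k:ℤ)+1 ∧ x ≠ (k:ℤ)+2 ∧ x ≠ (k:ℤ)+3 ∧ x ≠ -((k:ℤ)+1)
      ∧ x ≠ -((k:ℤ)+2) ∧ x ≠ -((k:ℤ)+3)) := by omega
  rcases H with rfl|rfl|rfl|rfl|rfl|rfl|⟨h1,h2,h3,h4,h5,h6⟩ <;>
    simp (disch := omega) only [teq1, teq2, teq3, teq4, teq5] <;> omega

theorem t_comm (k l : ℕ) (h : k + 2 ≤ l) : tP k * tP l = tP l * tP k := by
  ext x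
  simp only [Equiv.Perm.mul_apply, tP_apply]
  have H : x = (k:ℤ)+1 ∨ x = (k:ℤ)+2 ∨ x = (l:ℤ)+1 ∨ x = (l:ℤ)+2
      ∨ x = -((k:ℤ)+1) ∨ x = -((k:ℤ)+2) ∨ x = -((l:ℤ)+1) ∨ x = -((l:ℤ)+2)
      ∨ (x ≠ (k:ℤ)+1 ∧ x ≠ (k:ℤ)+2 ∧ x ≠ (l:ℤ)+1 ∧ x ≠ (l:ℤ)+2 ∧ x ≠ -((k:ℤ)+1)
         ∧ x ≠ -((k:ℤ)+2) ∧ x ≠ -((l:ℤ)+1) ∧ x ≠ -((l:ℤ)+2)) := by omega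
  rcases H with rfl|rfl|rfl|rfl|rfl|rfl|rfl|rfl|⟨h1,h2,h3,h4,h5,h6,h7,h8⟩ <;>
    simp (disch := omega) only [teq1, teq2, teq3, teq4, teq5] <;> omega

theorem nu_t_comm (k : ℕ) (h : 1 ≤ k) : nuP * tP k = tP k * nuP := by
  ext x
  simp only [Equiv.Perm.mul_apply, tP_apply, nuP_apply]
  have H : x = 1 ∨ x = -1 ∨ x = (k:ℤ)+1 ∨ x = (k:ℤ)+2 ∨ x = -((k:ℤ)+1) ∨ x = -((k:ℤ)+2)
      ∨ (x ≠ 1 ∧ x ≠ -1 ∧ x ≠ (k:ℤ)+1 ∧ x ≠ (k:ℤ)+2 ∧ x ≠ -((k:ℤ)+1) ∧ x ≠ -((k:ℤ)+2)) := by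
    omega
  rcases H with rfl|rfl|rfl|rfl|rfl|rfl|⟨h1,h2,h3,h4,h5,h6⟩ <;>
    simp (disch := omega) only [teq1, teq2, teq3, teq4, teq5, nq1, nq2, nq3] <;> omega

theorem nu_t0_braid : nuP * tP 0 * (nuP * tP 0) = tP 0 * nuP * (tP 0 * nuP) := by
  ext x
  simp only [Equiv.Perm.mul_apply, tP_apply, nuP_apply]
  have H : x = 1 ∨ x = 2 ∨ x = -1 ∨ x = -2 ∨ (x ≠ 1 ∧ x ≠ 2 ∧ x ≠ -1 ∧ x ≠ -2) := by omega
  rcases H with rfl|rfl|rfl|rfl|⟨h1,h2,h3,h4⟩ <;>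
    simp (disch := omega) only [teq1, teq2, teq3, teq4, teq5, nq1, nq2, nq3] <;> omega

theorem t_conj_f (k : ℕ) : tP k * fP (k+1) * tP k = fP (k+2) := by
  ext x
  simp only [Equiv.Perm.mul_apply, tP_apply, fP_apply]
  have H : x = (k:ℤ)+1 ∨ x = (k:ℤ)+2 ∨ x = -((k:ℤ)+1) ∨ x = -((k:ℤ)+2)
      ∨ (x ≠ (k:ℤ)+1 ∧ x ≠ (k:ℤ)+2 ∧ x ≠ -((k:ℤ)+1) ∧ x ≠ -((k:ℤ)+2)) := by omega
  rcases H with rfl|rfl|rfl|rfl|⟨h1,h2,h3,h4⟩ <;>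
    simp (disch := omega) only [teq1, teq2, teq3, teq4, teq5, fq1, fq2, fq3] <;> omega

theorem nuP_eq_fP_one : nuP = fP 1 := by
  ext x
  simp only [nuP_apply, fP_apply, nuFun, fFun]
  norm_num

/-! ### Generic order lemmas -/

section ordlemmas
variable {G : Type*} [Group G] {a b : G}

theorem ord2 (ha : a*a = 1) (hb : b*b = 1) (h : a*b = b*a) : (a*b)^2 = 1 := by
  calc (a*b)^2 = a*(b*b)*a := by rw [sq]; nth_rewrite 2 [h]; group
  _ = a*a := by rw [hb]; group
  _ = 1 := ha

theorem ord3 (ha : a*a = 1) (hb : b*b = 1) (h : a*b*a = b*a*b) : (a*b)^3 = 1 := by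
  calc (a*b)^3 = (a*b*a)*(b*a*b) := by rw [pow_succ, pow_succ, pow_one]; group
  _ = (b*a*b)*(b*a*b) := by rw [h]
  _ = b*a*(b*b)*(a*b) := by group
  _ = b*a*(a*b) := by rw [hb]; group
  _ = b*(a*a)*b := by group
  _ = b*b := by rw [ha]; group
  _ = 1 := hb

theorem ord4 (ha : a*a = 1) (hb : b*b = 1) (h : a*b*(a*b) = b*a*(b*a)) : (a*b)^4 = 1 := by
  calc (a*b)^4 = (a*b*(a*b))*(a*b*(a*b)) := by rw [pow_succ, pow_succ, pow_succ, pow_one]; group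
  _ = (a*b*(a*b))*(b*a*(b*a)) := by nth_rewrite 2 [h]; rfl
  _ = a*b*a*(b*b)*(a*(b*a)) := by group
  _ = a*b*((a*a)*(b*a)) := by rw [hb]; group
  _ = a*(b*b)*a := by rw [ha]; group
  _ = a*a := by rw [hb]; group
  _ = 1 := ha

end ordlemmas

end BnAux

namespace BnAux

/-- the images of the simple generators -/
def fB (n : ℕ) (i : Fin n) : Equiv.Perm ℤ :=
  if (i : ℕ) = n - 1 then nuP else tP (n - 2 - (i : ℕ))

theorem fB_mul_self (n : ℕ) (i : Fin n) : fB n i * fB n i = 1 := by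
  unfold fB; split_ifs
  · exact nuP_mul_self
  · exact tP_mul_self _

theorem fB_liftable (n : ℕ) (hn : 2 ≤ n) : (CoxeterMatrix.Bₙ n).IsLiftable (fB n) := by
  intro i j
  have hMat : (CoxeterMatrix.Bₙ n) i j
      = if i = j then 1
        else if (i:ℕ) = n - 1 ∧ (j:ℕ) = n - 2 ∨ (j:ℕ) = n - 1 ∧ (i:ℕ) = n - 2 then 4
        else if (j:ℕ) + 1 = (i:ℕ) ∨ (i:ℕ) + 1 = (j:ℕ) then 3 else 2 := rfl
  rw [hMat]
  have hi := i.isLt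
  have hj := j.isLt
  split_ifs with h1 h2 h3
  · subst h1; rw [pow_one]; exact fB_mul_self n i
  · -- order 4 : the pair {n-1, n-2}
    have hij : (i:ℕ) ≠ (j:ℕ) := fun hc => h1 (Fin.ext hc)
    rcases h2 with ⟨hi1, hj2⟩ | ⟨hj1, hi2⟩
    · have e1 : fB n i = nuP := by unfold fB; rw [if_pos hi1]
      have e2 : fB n j = tP 0 := by
        unfold fB; rw [if_neg (by omega), show n - 2 - (j:ℕ) = 0 by omega]
      rw [e1, e2]
      exact ord4 nuP_mul_self (tP_mul_self 0) nu_t0_braid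
    · have e1 : fB n j = nuP := by unfold fB; rw [if_pos hj1]
      have e2 : fB n i = tP 0 := by
        unfold fB; rw [if_neg (by omega), show n - 2 - (i:ℕ) = 0 by omega]
      rw [e1, e2]
      exact ord4 (tP_mul_self 0) nuP_mul_self nu_t0_braid.symm
  · -- order 3 : adjacent pairs, both ≤ n-2
    have hij : (i:ℕ) ≠ (j:ℕ) := fun hc => h1 (Fin.ext hc)
    have hi2 : (i:ℕ) ≤ n - 2 := by omega
    have hj2 : (j:ℕ) ≤ n - 2 := by omega
    have e1 : fB n i = tP (n - 2 - (i:ℕ)) := by unfold fB; rw [if_neg (by omega)]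
    have e2 : fB n j = tP (n - 2 - (j:ℕ)) := by unfold fB; rw [if_neg (by omega)]
    rw [e1, e2]
    rcases h3 with hadj | hadj
    · -- j + 1 = i : with c := n-2-i, n-2-j = c+1
      have hc : n - 2 - (j:ℕ) = (n - 2 - (i:ℕ)) + 1 := by omega
      rw [hc]
      exact ord3 (tP_mul_self _) (tP_mul_self _) (t_braid _)
    · have hc : n - 2 - (i:ℕ) = (n - 2 - (j:ℕ)) + 1 := by omega
      rw [hc]
      exact ord3 (tP_mul_self _) (tP_mul_self _) (t_braid _).symm
  · -- order 2 : commuting pairs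
    have hij : (i:ℕ) ≠ (j:ℕ) := fun hc => h1 (Fin.ext hc)
    by_cases hi1 : (i:ℕ) = n - 1
    · have hj3 : (j:ℕ) ≤ n - 3 ∧ 3 ≤ n := by omega
      have e1 : fB n i = nuP := by unfold fB; rw [if_pos hi1]
      have e2 : fB n j = tP (n - 2 - (j:ℕ)) := by unfold fB; rw [if_neg (by omega)]
      rw [e1, e2]
      exact ord2 nuP_mul_self (tP_mul_self _) (nu_t_comm _ (by omega))
    · by_cases hj1 : (j:ℕ) = n - 1
      · have hi3 : (i:ℕ) ≤ n - 3 ∧ 3 ≤ n := by omega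
        have e1 : fB n j = nuP := by unfold fB; rw [if_pos hj1]
        have e2 : fB n i = tP (n - 2 - (i:ℕ)) := by unfold fB; rw [if_neg (by omega)]
        rw [e1, e2]
        exact ord2 (tP_mul_self _) nuP_mul_self (nu_t_comm _ (by omega)).symm
      · have e1 : fB n i = tP (n - 2 - (i:ℕ)) := by unfold fB; rw [if_neg hi1]
        have e2 : fB n j = tP (n - 2 - (j:ℕ)) := by unfold fB; rw [if_neg hj1]
        rw [e1, e2]
        rcases le_or_gt ((i:ℕ)) ((j:ℕ)) with hle | hlt
        · have : (n - 2 - (j:ℕ)) + 2 ≤ n - 2 - (i:ℕ) := by omega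
          exact ord2 (tP_mul_self _) (tP_mul_self _) (t_comm _ _ this).symm
        · have : (n - 2 - (i:ℕ)) + 2 ≤ n - 2 - (j:ℕ) := by omega
          exact ord2 (tP_mul_self _) (tP_mul_self _) (t_comm _ _ this)

end BnAux

namespace BnAux

open Finset

/-! ### Counting inversions -/

/-- inversion pairs (tagged) -/
noncomputable def Dset (n : ℕ) (g : Equiv.Perm ℤ) : Finset ((ℤ × ℤ) × Bool) :=
  (((Finset.Icc 1 (n:ℤ)) ×ˢ (Finset.Icc 1 (n:ℤ))) ×ˢ (Finset.univ : Finset Bool)).filter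
    fun q => q.1.1 < q.1.2 ∧ (if q.2 then g q.1.2 < g q.1.1 else g q.1.1 + g q.1.2 < 0)

/-- negative positions -/
noncomputable def Cset (n : ℕ) (g : Equiv.Perm ℤ) : Finset ℤ :=
  (Finset.Icc 1 (n:ℤ)).filter fun i => g i < 0

noncomputable def NN (n : ℕ) (g : Equiv.Perm ℤ) : ℕ := (Dset n g).card + (Cset n g).card

theorem mem_Dset {n : ℕ} {g : Equiv.Perm ℤ} {q : (ℤ × ℤ) × Bool} :
    q ∈ Dset n g ↔ (1 ≤ q.1.1 ∧ q.1.1 ≤ n) ∧ (1 ≤ q.1.2 ∧ q.1.2 ≤ n) ∧ q.1.1 < q.1.2 ∧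
      (if q.2 then g q.1.2 < g q.1.1 else g q.1.1 + g q.1.2 < 0) := by
  unfold Dset
  simp only [Finset.mem_filter, Finset.mem_product, Finset.mem_Icc, Finset.mem_univ, and_true,
    true_and]
  tauto

theorem mem_Dset' {n : ℕ} {g : Equiv.Perm ℤ} {i j : ℤ} {t : Bool} :
    (((i, j), t) : (ℤ × ℤ) × Bool) ∈ Dset n g ↔ (1 ≤ i ∧ i ≤ n) ∧ (1 ≤ j ∧ j ≤ n) ∧ i < j ∧
      (if t then g j < g i else g i + g j < 0) :=
  mem_Dset

theorem mem_Cset {n : ℕ} {g : Equiv.Perm ℤ} {i : ℤ} :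
    i ∈ Cset n g ↔ (1 ≤ i ∧ i ≤ n) ∧ g i < 0 := by
  unfold Cset; simp [Finset.mem_filter, Finset.mem_Icc]

theorem NN_one (n : ℕ) : NN n 1 = 0 := by
  have hD : Dset n 1 = ∅ := by
    apply Finset.eq_empty_of_forall_notMem
    intro q hq
    obtain ⟨⟨i, j⟩, t⟩ := q
    rw [mem_Dset] at hq
    rcases hq with ⟨h1, h2, h3, h4⟩
    simp only at h1 h2 h3
    simp only [Equiv.Perm.one_apply] at h4
    rcases t with _ | _ <;> simp only [Bool.false_eq_true, if_false, if_true] at h4 <;> omega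
  have hC : Cset n 1 = ∅ := by
    apply Finset.eq_empty_of_forall_notMem
    intro i hi
    rw [mem_Cset] at hi
    simp only [Equiv.Perm.one_apply] at hi
    omega
  simp [NN, hD, hC]

/-- signed permutations -/
def IsSgn (g : Equiv.Perm ℤ) : Prop := ∀ x : ℤ, g (-x) = -(g x)

theorem isSgn_one : IsSgn 1 := fun x => rfl

theorem isSgn_mul {g h : Equiv.Perm ℤ} (hg : IsSgn g) (hh : IsSgn h) : IsSgn (g * h) := by
  intro x
  simp only [Equiv.Perm.mul_apply, hh x, hg (h x)]

theorem isSgn_tP (k : ℕ) : IsSgn (tP k) := by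
  intro x
  simp only [tP_apply]
  have H : x = (k:ℤ)+1 ∨ x = (k:ℤ)+2 ∨ x = -((k:ℤ)+1) ∨ x = -((k:ℤ)+2)
      ∨ (x ≠ (k:ℤ)+1 ∧ x ≠ (k:ℤ)+2 ∧ x ≠ -((k:ℤ)+1) ∧ x ≠ -((k:ℤ)+2)) := by omega
  rcases H with rfl|rfl|rfl|rfl|⟨h1,h2,h3,h4⟩ <;>
    simp (disch := omega) only [teq1, teq2, teq3, teq4, teq5] <;> omega

theorem isSgn_nuP : IsSgn nuP := by
  intro x
  simp only [nuP_apply]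
  have H : x = 1 ∨ x = -1 ∨ (x ≠ 1 ∧ x ≠ -1) := by omega
  rcases H with rfl|rfl|⟨h1,h2⟩ <;> simp (disch := omega) only [nq1, nq2, nq3] <;> omega

theorem isSgn_fB (n : ℕ) (i : Fin n) : IsSgn (fB n i) := by
  unfold fB; split_ifs
  · exact isSgn_nuP
  · exact isSgn_tP _

/-! ### Step lemmas -/

/-- the pair-relabelling map for `tP k` -/
def eT (k : ℕ) : (ℤ × ℤ) × Bool → (ℤ × ℤ) × Bool
  | ((i, j), t) =>
    if i = (k:ℤ)+1 ∧ j = (k:ℤ)+2 then ((i, j), t) else ((tFun k i, tFun k j), t)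

theorem eT_eT (k : ℕ) (q : (ℤ × ℤ) × Bool) (h1 : 1 ≤ q.1.1) (hlt : q.1.1 < q.1.2) :
    eT k (eT k q) = q := by
  obtain ⟨⟨i, j⟩, t⟩ := q
  simp only at h1 hlt
  by_cases ha : i = (k:ℤ)+1 ∧ j = (k:ℤ)+2
  · have e : eT k ((i, j), t) = ((i, j), t) := by simp only [eT]; rw [if_pos ha]
    rw [e, e]
  · have e : eT k ((i, j), t) = ((tFun k i, tFun k j), t) := by simp only [eT]; rw [if_neg ha]
    rw [e]
    have hb : ¬(tFun k i = (k:ℤ)+1 ∧ tFun k j = (k:ℤ)+2) := by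
      rintro ⟨hb1, hb2⟩
      have e1 : tFun k (tFun k i) = tFun k ((k:ℤ)+1) := by rw [hb1]
      have e2 : tFun k (tFun k j) = tFun k ((k:ℤ)+2) := by rw [hb2]
      rw [tFun_invol, teq1 k rfl] at e1
      rw [tFun_invol, teq2 k rfl] at e2
      omega
    have e2 : eT k ((tFun k i, tFun k j), t) = ((tFun k (tFun k i), tFun k (tFun k j)), t) := by
      simp only [eT]; rw [if_neg hb]
    rw [e2, tFun_invol, tFun_invol]

theorem eT_maps {n k : ℕ} {g : Equiv.Perm ℤ} (hk : k + 2 ≤ n) {q : (ℤ × ℤ) × Bool}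
    (hq : q ∈ Dset n (g * tP k)) (hne : q ≠ (((k:ℤ)+1, (k:ℤ)+2), true)) :
    eT k q ∈ Dset n g := by
  obtain ⟨⟨i, j⟩, t⟩ := q
  rw [mem_Dset] at hq
  obtain ⟨⟨hi1, hi2⟩, ⟨hj1, hj2⟩, hij, hcond⟩ := hq
  simp only at hi1 hi2 hj1 hj2 hij
  simp only [Equiv.Perm.mul_apply, tP_apply] at hcond
  have hkn : (k:ℤ) + 2 ≤ (n:ℤ) := by exact_mod_cast hk
  simp only [eT]
  split_ifs with hsp
  · -- special pair : tag must be false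
    obtain ⟨hsp1, hsp2⟩ := hsp
    subst hsp1; subst hsp2
    rcases t with _ | _
    · rw [mem_Dset]
      simp only [Bool.false_eq_true, if_false] at hcond ⊢
      rw [teq1 k rfl, teq2 k rfl] at hcond
      refine ⟨⟨by omega, by omega⟩, ⟨by omega, by omega⟩, by omega, by omega⟩
    · exact absurd rfl hne
  · rw [mem_Dset]
    simp only
    have hmemi : 1 ≤ tFun k i ∧ tFun k i ≤ (n:ℤ) := by
      simp only [tFun]; split_ifs <;> omega
    have hmemj : 1 ≤ tFun k j ∧ tFun k j ≤ (n:ℤ) := by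
      simp only [tFun]; split_ifs <;> omega
    have hmono : tFun k i < tFun k j := by
      simp only [tFun]; split_ifs <;> omega
    exact ⟨hmemi, hmemj, hmono, hcond⟩

theorem D_step_t {n k : ℕ} (hk : k + 2 ≤ n) (g : Equiv.Perm ℤ) :
    (Dset n (g * tP k)).card ≤ (Dset n g).card + 1 := by
  set sp : (ℤ × ℤ) × Bool := (((k:ℤ)+1, (k:ℤ)+2), true) with hsp
  have h1 : Dset n (g * tP k) ⊆ insert sp ((Dset n (g * tP k)).erase sp) := by
    intro q hq
    by_cases hqs : q = sp
    · exact hqs ▸ Finset.mem_insert_self _ _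
    · exact Finset.mem_insert_of_mem (Finset.mem_erase.mpr ⟨hqs, hq⟩)
  calc (Dset n (g * tP k)).card ≤ (insert sp ((Dset n (g * tP k)).erase sp)).card :=
        Finset.card_le_card h1
  _ ≤ ((Dset n (g * tP k)).erase sp).card + 1 := Finset.card_insert_le _ _
  _ ≤ (Dset n g).card + 1 := by
      gcongr ?_ + 1
      apply Finset.card_le_card_of_injOn (eT k)
      · intro q hq
        rw [Finset.mem_coe, Finset.mem_erase] at hq
        exact eT_maps hk hq.2 hq.1
      · intro q hq q' hq' heq
        rw [Finset.mem_coe, Finset.mem_erase, mem_Dset] at hq hq'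
        have e1 := eT_eT k q (by exact_mod_cast hq.2.1.1) hq.2.2.2.1
        have e2 := eT_eT k q' (by exact_mod_cast hq'.2.1.1) hq'.2.2.2.1
        rw [← e1, ← e2, heq]

theorem C_step_t {n k : ℕ} (hk : k + 2 ≤ n) (g : Equiv.Perm ℤ) :
    (Cset n (g * tP k)).card ≤ (Cset n g).card := by
  apply Finset.card_le_card_of_injOn (tFun k)
  · intro i hi
    rw [Finset.mem_coe, mem_Cset] at hi ⊢
    obtain ⟨⟨h1, h2⟩, h3⟩ := hi
    simp only [Equiv.Perm.mul_apply, tP_apply] at h3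
    have hkn : (k:ℤ) + 2 ≤ (n:ℤ) := by exact_mod_cast hk
    refine ⟨?_, h3⟩
    simp only [tFun]; split_ifs <;> omega
  · intro i _ j _ h
    have := congrArg (tFun k) h
    rwa [tFun_invol, tFun_invol] at this

end BnAux

namespace BnAux

/-- the tag-flipping map for `nuP` -/
def eN : (ℤ × ℤ) × Bool → (ℤ × ℤ) × Bool
  | ((i, j), t) => ((i, j), if i = 1 then !t else t)

theorem eN_eN (q : (ℤ × ℤ) × Bool) : eN (eN q) = q := by
  obtain ⟨⟨i, j⟩, t⟩ := q
  by_cases h : i = (1:ℤ) <;> simp [eN, h]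

theorem eN_maps {n : ℕ} {g : Equiv.Perm ℤ} (hg : IsSgn g) {q : (ℤ × ℤ) × Bool}
    (hq : q ∈ Dset n (g * nuP)) : eN q ∈ Dset n g := by
  obtain ⟨⟨i, j⟩, t⟩ := q
  rw [mem_Dset] at hq
  obtain ⟨⟨hi1, hi2⟩, ⟨hj1, hj2⟩, hij, hcond⟩ := hq
  simp only at hi1 hi2 hj1 hj2 hij
  simp only [Equiv.Perm.mul_apply, nuP_apply] at hcond
  simp only [eN]
  rw [mem_Dset]
  by_cases hi : i = (1:ℤ)
  · subst hi
    rw [if_pos rfl]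
    have hj' : nuFun j = j := nq3 (by omega) (by omega)
    rw [nq1 rfl, hj'] at hcond
    have hgs := hg 1
    simp only
    refine ⟨⟨by omega, by omega⟩, ⟨by omega, by omega⟩, by omega, ?_⟩
    rcases t with _ | _
    · simp only [Bool.false_eq_true, if_false, Bool.not_false, if_true] at hcond ⊢
      omega
    · simp only [if_true, Bool.not_true, Bool.false_eq_true, if_false] at hcond ⊢
      omega
  · rw [if_neg hi]
    have hi' : nuFun i = i := nq3 (by omega) (by omega)
    have hj' : nuFun j = j := nq3 (by omega) (by omega)
    rw [hi', hj'] at hcond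
    simp only
    exact ⟨⟨by omega, by omega⟩, ⟨by omega, by omega⟩, by omega, hcond⟩

theorem D_step_nu {n : ℕ} {g : Equiv.Perm ℤ} (hg : IsSgn g) :
    (Dset n (g * nuP)).card ≤ (Dset n g).card := by
  apply Finset.card_le_card_of_injOn eN
  · intro q hq
    exact eN_maps hg hq
  · intro q _ q' _ heq
    have := congrArg eN heq
    rwa [eN_eN, eN_eN] at this

theorem C_step_nu {n : ℕ} (g : Equiv.Perm ℤ) :
    (Cset n (g * nuP)).card ≤ (Cset n g).card + 1 := by
  have h1 : Cset n (g * nuP) ⊆ insert 1 ((Cset n (g * nuP)).erase 1) := by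
    intro q hq
    by_cases hqs : q = 1
    · exact hqs ▸ Finset.mem_insert_self _ _
    · exact Finset.mem_insert_of_mem (Finset.mem_erase.mpr ⟨hqs, hq⟩)
  calc (Cset n (g * nuP)).card ≤ (insert (1:ℤ) ((Cset n (g * nuP)).erase 1)).card :=
        Finset.card_le_card h1
  _ ≤ ((Cset n (g * nuP)).erase 1).card + 1 := Finset.card_insert_le _ _
  _ ≤ (Cset n g).card + 1 := by
      gcongr ?_ + 1
      apply Finset.card_le_card_of_injOn id
      · intro i hi
        rw [Finset.mem_coe, Finset.mem_erase, mem_Cset] at hi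
        obtain ⟨hne, ⟨h1, h2⟩, h3⟩ := hi
        simp only [Equiv.Perm.mul_apply, nuP_apply] at h3
        rw [nq3 (by omega) (by omega)] at h3
        rw [id, Finset.mem_coe, mem_Cset]
        exact ⟨⟨h1, h2⟩, h3⟩
      · intro a _ b _ h
        simpa using h

/-- one step of the word : `NN` grows by at most 1 -/
theorem NN_step {n : ℕ} (hn : 2 ≤ n) {g : Equiv.Perm ℤ} (hg : IsSgn g) (i : Fin n) :
    NN n (g * fB n i) ≤ NN n g + 1 := by
  unfold NN fB
  split_ifs with h
  · have := D_step_nu (n := n) hg (g := g)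
    have := C_step_nu (n := n) g
    omega
  · have hk : (n - 2 - (i:ℕ)) + 2 ≤ n := by have := i.isLt; omega
    have := D_step_t hk g
    have := C_step_t hk g
    omega

end BnAux

namespace BnAux

open CoxeterSystem

variable (n : ℕ)

/-- the lifted homomorphism -/
noncomputable def phi (hn : 2 ≤ n) : (CoxeterMatrix.Bₙ n).Group →* Equiv.Perm ℤ :=
  (CoxeterMatrix.Bₙ n).toCoxeterSystem.lift ⟨fB n, fB_liftable n hn⟩

theorem phi_simple (hn : 2 ≤ n) (i : Fin n) :
    phi n hn ((CoxeterMatrix.Bₙ n).toCoxeterSystem.simple i) = fB n i :=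
  CoxeterSystem.lift_apply_simple _ _ i

theorem phi_bound (hn : 2 ≤ n) (ω : List (Fin n)) :
    IsSgn (phi n hn ((CoxeterMatrix.Bₙ n).toCoxeterSystem.wordProd ω)) ∧
      NN n (phi n hn ((CoxeterMatrix.Bₙ n).toCoxeterSystem.wordProd ω)) ≤ ω.length := by
  induction ω using List.reverseRecOn with
  | nil =>
    rw [CoxeterSystem.wordProd_nil, map_one]
    exact ⟨isSgn_one, by rw [NN_one]; exact Nat.le_refl 0⟩
  | append_singleton ω i ih =>
    rw [CoxeterSystem.wordProd_append, CoxeterSystem.wordProd_singleton, map_mul, phi_simple]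
    constructor
    · exact isSgn_mul ih.1 (isSgn_fB n i)
    · calc NN n (phi n hn ((CoxeterMatrix.Bₙ n).toCoxeterSystem.wordProd ω) * fB n i)
          ≤ NN n (phi n hn ((CoxeterMatrix.Bₙ n).toCoxeterSystem.wordProd ω)) + 1 :=
            NN_step hn ih.1 i
      _ ≤ ω.length + 1 := by have := ih.2; omega
      _ = (ω ++ [i]).length := by simp

theorem length_lower_bound (hn : 2 ≤ n) (w : (CoxeterMatrix.Bₙ n).Group) :
    NN n (phi n hn w) ≤ (CoxeterMatrix.Bₙ n).toCoxeterSystem.length w := by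
  obtain ⟨ω, hred, rfl⟩ := (CoxeterMatrix.Bₙ n).toCoxeterSystem.exists_reduced_word' w
  rw [hred]
  exact (phi_bound n hn ω).2

end BnAux

namespace BnAux

open List

/-- products of reversed lists of involutions -/
theorem reverse_prod {l : List (Equiv.Perm ℤ)} (h : ∀ x ∈ l, x * x = 1) :
    l.reverse.prod = l.prod⁻¹ := by
  induction l with
  | nil => simp
  | cons a l ih =>
    have ha : a⁻¹ = a := inv_eq_of_mul_eq_one_right (h a mem_cons_self)
    rw [reverse_cons, prod_append, prod_singleton, prod_cons, mul_inv_rev, ha,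
      ih fun x hx => h x (mem_cons_of_mem a hx)]

/-- the conjugation chain -/
theorem conj_chain : ∀ j : ℕ,
    ((List.range j).map (fun k => tP (j - 1 - k))).prod * nuP *
      ((List.range j).map (fun k => tP (j - 1 - k))).prod⁻¹ = fP (j + 1) := by
  intro j
  induction j with
  | zero => simpa using nuP_eq_fP_one
  | succ j ih =>
    have hmap : (List.range (j+1)).map (fun k => tP (j + 1 - 1 - k))
        = tP j :: (List.range j).map (fun k => tP (j - 1 - k)) := by
      rw [List.range_succ_eq_map, List.map_cons, List.map_map]
      refine congrArg₂ List.cons ?_ ?_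
      · show tP (j + 1 - 1 - 0) = tP j
        congr 1 <;> omega
      · apply List.map_congr_left
        intro k _
        show tP (j + 1 - 1 - (k+1)) = tP (j - 1 - k)
        congr 1 <;> omega
    rw [hmap, List.prod_cons, mul_inv_rev, tP_inv]
    calc tP j * ((List.range j).map (fun k => tP (j - 1 - k))).prod * nuP *
          (((List.range j).map (fun k => tP (j - 1 - k))).prod⁻¹ * tP j)
        = tP j * (((List.range j).map (fun k => tP (j - 1 - k))).prod * nuP *
            ((List.range j).map (fun k => tP (j - 1 - k))).prod⁻¹) * tP j := by group
      _ = tP j * fP (j + 1) * tP j := by rw [ih]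
      _ = fP (j + 2) := t_conj_f j

end BnAux

namespace BnAux

open List
open Fin.NatCast

theorem tail_finRange (n : ℕ) (hn : 2 ≤ n) [NeZero n] :
    (List.finRange n).tail = (List.range (n-1)).map (fun k => ((k+1 : ℕ) : Fin n)) := by
  apply List.ext_getElem
  · simp [List.length_tail, List.length_finRange]
  · intro i h1 h2
    rw [List.getElem_tail, List.getElem_finRange, List.getElem_map, List.getElem_range]
    apply Fin.ext
    rw [Fin.val_natCast]
    simp only [List.length_tail, List.length_finRange] at h1
    simp only [Fin.coe_cast]
    rw [Nat.mod_eq_of_lt (by omega)]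

theorem fB_natCast (n : ℕ) (hn : 2 ≤ n) [NeZero n] (k : ℕ) (hk : k < n - 1) :
    fB n ((k+1 : ℕ) : Fin n) = if k = n - 2 then nuP else tP (n - 2 - 1 - k) := by
  unfold fB
  rw [Fin.val_natCast, Nat.mod_eq_of_lt (by omega)]
  by_cases h : k = n - 2
  · rw [if_pos (by omega), if_pos h]
  · rw [if_neg (by omega), if_neg h]
    congr 1
    omega

theorem phi_wordProd (n : ℕ) (hn : 2 ≤ n) (ω : List (Fin n)) :
    phi n hn ((CoxeterMatrix.Bₙ n).toCoxeterSystem.wordProd ω) = (ω.map (fB n)).prod := by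
  unfold CoxeterSystem.wordProd
  rw [map_list_prod, List.map_map]
  congr 1

/-- the image of the word `u` -/
theorem phi_u (n : ℕ) (hn : 2 ≤ n) :
    phi n hn ((CoxeterMatrix.Bₙ n).toCoxeterSystem.wordProd (uWordB n)) = fP (n-1) := by
  haveI : NeZero n := ⟨by omega⟩
  rw [phi_wordProd n hn]
  unfold uWordB
  have map_tail : ∀ (l' : List (Fin n)),
      List.map (fB n) l'.tail = (List.map (fB n) l').tail := by
    intro l'; cases l' <;> simp
  rw [List.map_append, tail_finRange n hn, map_tail, List.map_reverse]
  -- now everything is about `range (n-1)`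
  have hsplit : List.range (n-1) = List.range (n-2) ++ [n-2] := by
    rw [show n - 1 = (n-2) + 1 by omega, List.range_succ]
  set Q : List (Equiv.Perm ℤ) := (List.range (n-2)).map (fun k => tP (n - 2 - 1 - k)) with hQ
  have hLst : ((List.range (n-1)).map (fun k => ((k+1 : ℕ) : Fin n))).map (fB n)
      = Q ++ [nuP] := by
    rw [List.map_map, hsplit, List.map_append]
    congr 1
    · rw [hQ]
      apply List.map_congr_left
      intro k hk
      rw [List.mem_range] at hk
      rw [Function.comp_apply, fB_natCast n hn k (by omega), if_neg (by omega)]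
    · simp only [List.map_cons, List.map_nil, Function.comp_apply]
      rw [fB_natCast n hn (n-2) (by omega), if_pos rfl]
  rw [hLst]
  have hrev : (Q ++ [nuP]).reverse.tail = Q.reverse := by
    rw [List.reverse_append, List.reverse_singleton]
    rfl
  rw [hrev, List.prod_append, List.prod_append, List.prod_singleton]
  have hQinv : Q.reverse.prod = Q.prod⁻¹ := by
    apply reverse_prod
    intro x hx
    rw [hQ, List.mem_map] at hx
    obtain ⟨k, _, rfl⟩ := hx
    exact tP_mul_self _
  rw [hQinv]
  have hc := conj_chain (n-2)
  rw [← hQ, show n - 2 + 1 = n - 1 by omega] at hc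
  exact hc

end BnAux

namespace BnAux

theorem Gval_low (n : ℕ) (hn : 2 ≤ n) {x : ℤ} (h1 : 1 ≤ x) (h2 : x ≤ (n:ℤ) - 2) :
    (fP (n-1) * (tP (n-2) * fP (n-1))) x = x := by
  simp only [Equiv.Perm.mul_apply, fP_apply, tP_apply]
  simp (disch := omega) only [fq3, teq5]

theorem Gval_n1 (n : ℕ) (hn : 2 ≤ n) :
    (fP (n-1) * (tP (n-2) * fP (n-1))) ((n:ℤ)-1) = -(n:ℤ) := by
  simp only [Equiv.Perm.mul_apply, fP_apply, tP_apply]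
  simp (disch := omega) only [fq1, fq2, fq3, teq1, teq2, teq3, teq4, teq5]
  omega

theorem Gval_n (n : ℕ) (hn : 2 ≤ n) :
    (fP (n-1) * (tP (n-2) * fP (n-1))) (n:ℤ) = -((n:ℤ)-1) := by
  simp only [Equiv.Perm.mul_apply, fP_apply, tP_apply]
  simp (disch := omega) only [fq1, fq2, fq3, teq1, teq2, teq3, teq4, teq5]
  omega

theorem Cset_G (n : ℕ) (hn : 2 ≤ n) :
    Cset n (fP (n-1) * (tP (n-2) * fP (n-1))) = {(n:ℤ)-1, (n:ℤ)} := by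
  ext x
  rw [mem_Cset, Finset.mem_insert, Finset.mem_singleton]
  constructor
  · rintro ⟨⟨hx1, hxn⟩, hneg⟩
    by_cases hle : x ≤ (n:ℤ) - 2
    · rw [Gval_low n hn hx1 hle] at hneg; omega
    · omega
  · rintro (rfl | rfl)
    · exact ⟨⟨by omega, by omega⟩, by rw [Gval_n1 n hn]; omega⟩
    · exact ⟨⟨by omega, by omega⟩, by rw [Gval_n n hn]; omega⟩

theorem Dset_G (n : ℕ) (hn : 2 ≤ n) :
    Dset n (fP (n-1) * (tP (n-2) * fP (n-1)))
      = ((Finset.Icc 1 ((n:ℤ)-2)) ×ˢ ({(n:ℤ)-1, (n:ℤ)} : Finset ℤ)) ×ˢ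
          (Finset.univ : Finset Bool)
        ∪ {(((n:ℤ)-1, (n:ℤ)), false)} := by
  ext q
  obtain ⟨⟨i, j⟩, t⟩ := q
  rw [mem_Dset', Finset.mem_union, Finset.mem_product, Finset.mem_product, Finset.mem_singleton,
    Finset.mem_Icc, Finset.mem_insert, Finset.mem_singleton]
  simp only [Finset.mem_univ, and_true, Prod.mk.injEq]
  constructor
  · rintro ⟨⟨hi1, hi2⟩, ⟨hj1, hj2⟩, hij, hcond⟩
    by_cases hjle : j ≤ (n:ℤ) - 2
    · exfalso
      rw [Gval_low n hn (by omega) (by omega), Gval_low n hn (by omega) (by omega)] at hcond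
      rcases t with _ | _ <;>
        simp only [Bool.false_eq_true, if_false, if_true] at hcond <;> omega
    · have hj : j = (n:ℤ)-1 ∨ j = (n:ℤ) := by omega
      by_cases hile : i ≤ (n:ℤ) - 2
      · exact Or.inl ⟨⟨by omega, by omega⟩, hj⟩
      · -- i = n-1, j = n, and the tag must be false
        have hi : i = (n:ℤ)-1 := by omega
        have hjn : j = (n:ℤ) := by omega
        subst hi; subst hjn
        rw [Gval_n1 n hn, Gval_n n hn] at hcond
        rcases t with _ | _
        · exact Or.inr ⟨⟨rfl, rfl⟩, rfl⟩
        · simp only [if_true] at hcond; omega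
  · rintro (⟨⟨hi1, hi2⟩, hj⟩ | ⟨⟨hi, hj⟩, ht⟩)
    · have hGi : (fP (n-1) * (tP (n-2) * fP (n-1))) i = i := Gval_low n hn hi1 hi2
      have hGj : (fP (n-1) * (tP (n-2) * fP (n-1))) j < 0 := by
        rcases hj with rfl | rfl
        · rw [Gval_n1 n hn]; omega
        · rw [Gval_n n hn]; omega
      refine ⟨⟨by omega, by omega⟩, ⟨?_, ?_⟩, ?_, ?_⟩
      · rcases hj with rfl | rfl <;> omega
      · rcases hj with rfl | rfl <;> omega
      · rcases hj with rfl | rfl <;> omega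
      · rcases t with _ | _ <;> simp only [Bool.false_eq_true, if_false, if_true]
        · rw [hGi]
          rcases hj with rfl | rfl
          · rw [Gval_n1 n hn]; omega
          · rw [Gval_n n hn]; omega
        · rw [hGi]; omega
    · subst hi; subst hj; subst ht
      refine ⟨⟨by omega, by omega⟩, ⟨by omega, by omega⟩, by omega, ?_⟩
      simp only [Bool.false_eq_true, if_false]
      rw [Gval_n1 n hn, Gval_n n hn]
      omega

theorem NN_G (n : ℕ) (hn : 2 ≤ n) :
    NN n (fP (n-1) * (tP (n-2) * fP (n-1))) = 4 * n - 5 := by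
  unfold NN
  rw [Cset_G n hn, Dset_G n hn]
  have hce : ((n:ℤ)-1) ∉ ({(n:ℤ)} : Finset ℤ) := by
    rw [Finset.mem_singleton]; omega
  have hC : ({(n:ℤ)-1, (n:ℤ)} : Finset ℤ).card = 2 := by
    rw [Finset.card_insert_of_notMem hce, Finset.card_singleton]
  have hdisj : Disjoint
      (((Finset.Icc 1 ((n:ℤ)-2)) ×ˢ ({(n:ℤ)-1, (n:ℤ)} : Finset ℤ)) ×ˢ
        (Finset.univ : Finset Bool))
      ({(((n:ℤ)-1, (n:ℤ)), false)} : Finset ((ℤ × ℤ) × Bool)) := by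
    rw [Finset.disjoint_singleton_right, Finset.mem_product, Finset.mem_product, Finset.mem_Icc]
    intro hmem
    have h2 : (1:ℤ) ≤ (n:ℤ)-1 ∧ ((n:ℤ)-1) ≤ (n:ℤ)-2 := hmem.1.1
    omega
  rw [Finset.card_union_of_disjoint hdisj, Finset.card_product, Finset.card_product,
    Finset.card_singleton, hC, Int.card_Icc]
  have h1 : ((n:ℤ) - 2 + 1 - 1).toNat = n - 2 := by omega
  rw [h1]
  have h2 : (Finset.univ : Finset Bool).card = 2 := by
    rw [Finset.card_univ, Fintype.card_bool]
  rw [h2]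
  omega

end BnAux


/-- In the Coxeter group of type `Bₙ` (the Weyl group of type `Cₙ`, with the bond of
order 4 between the last two generators), with `u = s₂ s₃ ⋯ s_n ⋯ s₃ s₂`, the word
`u s₁ u` of `4n − 5` letters is reduced; that is,
`ℓ(u s₁ u) = 4n − 5 = 2 ℓ(u) + 1`. -/
theorem typeB_usu_word_isReduced (n : ℕ) (hn : 2 ≤ n) :
    (CoxeterMatrix.Bₙ n).toCoxeterSystem.IsReduced (uWordB n ++ ⟨0, by omega⟩ :: uWordB n) ∧
      (CoxeterMatrix.Bₙ n).toCoxeterSystem.length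
        ((CoxeterMatrix.Bₙ n).toCoxeterSystem.wordProd (uWordB n ++ ⟨0, by omega⟩ :: uWordB n))
        = 4 * n - 5 ∧
      (CoxeterMatrix.Bₙ n).toCoxeterSystem.length
        ((CoxeterMatrix.Bₙ n).toCoxeterSystem.wordProd (uWordB n ++ ⟨0, by omega⟩ :: uWordB n))
        = 2 * (CoxeterMatrix.Bₙ n).toCoxeterSystem.length
            ((CoxeterMatrix.Bₙ n).toCoxeterSystem.wordProd (uWordB n)) + 1 := by
  classical
  set cs := (CoxeterMatrix.Bₙ n).toCoxeterSystem with hcs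
  have hulen : (uWordB n).length = 2 * n - 3 := by
    simp only [uWordB, List.length_append, List.length_tail, List.length_reverse,
      List.length_finRange]
    omega
  have hwlen : (uWordB n ++ (⟨0, by omega⟩ : Fin n) :: uWordB n).length = 4 * n - 5 := by
    simp only [List.length_append, List.length_cons, hulen]
    omega
  -- the image of the whole word under phi
  have hprod : cs.wordProd (uWordB n ++ (⟨0, by omega⟩ : Fin n) :: uWordB n)
      = cs.wordProd (uWordB n) * (cs.simple ⟨0, by omega⟩ * cs.wordProd (uWordB n)) := by
    rw [CoxeterSystem.wordProd_append, CoxeterSystem.wordProd_cons]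
  have hfB0 : BnAux.fB n ⟨0, by omega⟩ = BnAux.tP (n - 2) := by
    unfold BnAux.fB
    rw [if_neg (by simp; omega)]
    norm_num
  have hphi : BnAux.phi n hn (cs.wordProd (uWordB n ++ (⟨0, by omega⟩ : Fin n) :: uWordB n))
      = BnAux.fP (n-1) * (BnAux.tP (n-2) * BnAux.fP (n-1)) := by
    rw [hprod, map_mul, map_mul, BnAux.phi_u n hn, BnAux.phi_simple n hn, hfB0]
  -- lower bound for the length
  have hlow : 4 * n - 5 ≤ cs.length
      (cs.wordProd (uWordB n ++ (⟨0, by omega⟩ : Fin n) :: uWordB n)) := by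
    have := BnAux.length_lower_bound n hn
      (cs.wordProd (uWordB n ++ (⟨0, by omega⟩ : Fin n) :: uWordB n))
    rw [hphi, BnAux.NN_G n hn] at this
    exact this
  -- upper bound
  have hup : cs.length (cs.wordProd (uWordB n ++ (⟨0, by omega⟩ : Fin n) :: uWordB n))
      ≤ 4 * n - 5 := by
    have := cs.length_wordProd_le (uWordB n ++ (⟨0, by omega⟩ : Fin n) :: uWordB n)
    rwa [hwlen] at this
  have hlen : cs.length (cs.wordProd (uWordB n ++ (⟨0, by omega⟩ : Fin n) :: uWordB n))
      = 4 * n - 5 := le_antisymm hup hlow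
  -- length of u
  have huup : cs.length (cs.wordProd (uWordB n)) ≤ 2 * n - 3 := by
    have := cs.length_wordProd_le (uWordB n)
    rwa [hulen] at this
  have husplit : cs.length (cs.wordProd (uWordB n ++ (⟨0, by omega⟩ : Fin n) :: uWordB n))
      ≤ cs.length (cs.wordProd (uWordB n)) + (1 + cs.length (cs.wordProd (uWordB n))) := by
    rw [hprod]
    calc cs.length (cs.wordProd (uWordB n) * (cs.simple ⟨0, by omega⟩ * cs.wordProd (uWordB n)))
        ≤ cs.length (cs.wordProd (uWordB n))
          + cs.length (cs.simple ⟨0, by omega⟩ * cs.wordProd (uWordB n)) :=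
          cs.length_mul_le _ _
      _ ≤ cs.length (cs.wordProd (uWordB n))
          + (cs.length (cs.simple ⟨0, by omega⟩) + cs.length (cs.wordProd (uWordB n))) := by
          have := cs.length_mul_le (cs.simple ⟨0, by omega⟩) (cs.wordProd (uWordB n))
          omega
      _ = cs.length (cs.wordProd (uWordB n)) + (1 + cs.length (cs.wordProd (uWordB n))) := by
          rw [cs.length_simple]
  have hu : cs.length (cs.wordProd (uWordB n)) = 2 * n - 3 := by omega
  refine ⟨?_, hlen, ?_⟩
  · unfold CoxeterSystem.IsReduced
    rw [hlen, hwlen]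
  · rw [hlen, hu]
    omega
end
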